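/- arXiv:2104.14686 — 3 statements merged into one kernel-verified Lean document; each statement's English description precedes it below -/
import Mathlib

section
/- If m → G ← n and n → H ← p are monogamous cospans of hypergraphs with discrete interfaces, then their composite cospan m → G+_n H ← p (obtained by pushout, i.e. by gluing G and H along the common interface n) is again monogamous. -/
namespace SDRT

/-- A directed hypergraph: a set of nodes and, for each hyperedge, an ordered
list of source nodes and an ordered list of target nodes.  A `(k,l)`-hyperedge
is a hyperedge with `k` sources and `l` targets. -/
structure Hyp : Type 1 where
  V : Type
  E : Type
  src : E → List V
  tgt : E → List V

namespace Hyp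

/-- The set of pairs `(h, i)` such that `v` is the `i`-th target of the hyperedge `h`.
The in-degree of `v` is the number of such pairs. -/
def inPairs (G : Hyp) (v : G.V) : Set (G.E × ℕ) := {p | (G.tgt p.1)[p.2]? = some v}

/-- The set of pairs `(h, j)` such that `v` is the `j`-th source of the hyperedge `h`.
The out-degree of `v` is the number of such pairs. -/
def outPairs (G : Hyp) (v : G.V) : Set (G.E × ℕ) := {p | (G.src p.1)[p.2]? = some v}

/-- `v` has in-degree `0`. -/
def inDegZero (G : Hyp) (v : G.V) : Prop := G.inPairs v = ∅

/-- `v` has in-degree `1`. -/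
def inDegOne (G : Hyp) (v : G.V) : Prop := ∃! p, p ∈ G.inPairs v

/-- `v` has out-degree `0`. -/
def outDegZero (G : Hyp) (v : G.V) : Prop := G.outPairs v = ∅

/-- `v` has out-degree `1`. -/
def outDegOne (G : Hyp) (v : G.V) : Prop := ∃! p, p ∈ G.outPairs v

/-- `h'` is a successor of `h` if some node is both a target of `h` and a source of `h'`. -/
def Successor (G : Hyp) (h h' : G.E) : Prop := ∃ v, v ∈ G.tgt h ∧ v ∈ G.src h'

/-- `l` is a path (nonempty sequence of hyperedges, each a successor of the previous)
from the node `v` to the node `v'`: `v` is among the sources of the first hyperedge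
and `v'` among the targets of the last one. -/
def PathFrom (G : Hyp) (l : List G.E) (v v' : G.V) : Prop :=
  ∃ hne : l ≠ [], l.Chain' G.Successor ∧ v ∈ G.src (l.head hne) ∧ v' ∈ G.tgt (l.getLast hne)

/-- `l` is a path from the hyperedge `h` to the hyperedge `h'`. -/
def EdgePath (G : Hyp) (l : List G.E) (h h' : G.E) : Prop :=
  ∃ hne : l ≠ [], l.Chain' G.Successor ∧ l.head hne = h ∧ l.getLast hne = h'

/-- A hypergraph is acyclic if there is no path from a node to itself. -/
def Acyclic (G : Hyp) : Prop := ∀ (v : G.V) (l : List G.E), ¬ G.PathFrom l v v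

end Hyp

/-- A subhypergraph: a set of nodes and hyperedges closed under taking the sources
and targets of its hyperedges. -/
structure SubHyp (G : Hyp) where
  nodes : Set G.V
  edges : Set G.E
  src_mem : ∀ e ∈ edges, ∀ v ∈ G.src e, v ∈ nodes
  tgt_mem : ∀ e ∈ edges, ∀ v ∈ G.tgt e, v ∈ nodes

/-- A subhypergraph `H` of `G` is convex if every path in `G` between nodes of `H`
consists only of hyperedges of `H`. -/
def SubHyp.Convex {G : Hyp} (H : SubHyp G) : Prop :=
  ∀ v ∈ H.nodes, ∀ v' ∈ H.nodes, ∀ l, G.PathFrom l v v' → ∀ e ∈ l, e ∈ H.edges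

/-- The hypergraph underlying a subhypergraph. -/
def SubHyp.toHyp {G : Hyp} (H : SubHyp G) : Hyp where
  V := H.nodes
  E := H.edges
  src := fun e => (G.src e.1).pmap (fun v hv => (⟨v, hv⟩ : H.nodes))
    (fun v hv => H.src_mem e.1 e.2 v hv)
  tgt := fun e => (G.tgt e.1).pmap (fun v hv => (⟨v, hv⟩ : H.nodes))
    (fun v hv => H.tgt_mem e.1 e.2 v hv)

/-- A cospan of hypergraphs with discrete interfaces `m → G ← n`. -/
structure Cospan (m n : Type) : Type 1 where
  G : Hyp
  inp : m → G.V
  out : n → G.V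

namespace Cospan

/-- A cospan is monogamous if both legs are injective, nodes in the image of the
input leg have in-degree 0, all other nodes have in-degree 1, nodes in the image
of the output leg have out-degree 0, and all other nodes have out-degree 1. -/
def Monogamous {m n : Type} (A : Cospan m n) : Prop :=
  Function.Injective A.inp ∧ Function.Injective A.out ∧
  (∀ v ∈ Set.range A.inp, A.G.inDegZero v) ∧
  (∀ v ∉ Set.range A.inp, A.G.inDegOne v) ∧
  (∀ v ∈ Set.range A.out, A.G.outDegZero v) ∧
  (∀ v ∉ Set.range A.out, A.G.outDegOne v)

/-- A cospan is acyclic if its carrier is. -/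
def Acyclic {m n : Type} (A : Cospan m n) : Prop := A.G.Acyclic

/-- Composition of cospans by pushout: glue `G` and `H` along the common
interface `n`, identifying `A.out k` with `B.inp k` for every `k : n`. -/
def comp {m n p : Type} (A : Cospan m n) (B : Cospan n p) : Cospan m p where
  G := { V := Quot (fun x y : A.G.V ⊕ B.G.V =>
                      ∃ k : n, x = Sum.inl (A.out k) ∧ y = Sum.inr (B.inp k))
         E := A.G.E ⊕ B.G.E
         src := Sum.elim (fun e => (A.G.src e).map (fun v => Quot.mk _ (Sum.inl v)))
                         (fun e => (B.G.src e).map (fun v => Quot.mk _ (Sum.inr v)))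
         tgt := Sum.elim (fun e => (A.G.tgt e).map (fun v => Quot.mk _ (Sum.inl v)))
                         (fun e => (B.G.tgt e).map (fun v => Quot.mk _ (Sum.inr v))) }
  inp := fun x => Quot.mk _ (Sum.inl (A.inp x))
  out := fun y => Quot.mk _ (Sum.inr (B.out y))

/-- Monoidal product (tensor) of cospans: disjoint union of the carriers, with
the evident interface maps. -/
def tensor {m₁ n₁ m₂ n₂ : Type} (A : Cospan m₁ n₁) (B : Cospan m₂ n₂) :
    Cospan (m₁ ⊕ m₂) (n₁ ⊕ n₂) where
  G := { V := A.G.V ⊕ B.G.V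
         E := A.G.E ⊕ B.G.E
         src := Sum.elim (fun e => (A.G.src e).map Sum.inl) (fun e => (B.G.src e).map Sum.inr)
         tgt := Sum.elim (fun e => (A.G.tgt e).map Sum.inl) (fun e => (B.G.tgt e).map Sum.inr) }
  inp := Sum.elim (fun x => Sum.inl (A.inp x)) (fun x => Sum.inr (B.inp x))
  out := Sum.elim (fun y => Sum.inl (A.out y)) (fun y => Sum.inr (B.out y))

/-- The identity cospan on `k`: the discrete hypergraph on `k` with identity legs. -/
def idCospan (k : Type) : Cospan k k where
  G := { V := k, E := Empty, src := Empty.elim, tgt := Empty.elim }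
  inp := id
  out := id

end Cospan

/-- An isomorphism of cospans: a hypergraph isomorphism of the carriers commuting
with the interface legs. -/
structure CospanIso {m n : Type} (A B : Cospan m n) where
  nodeEquiv : A.G.V ≃ B.G.V
  edgeEquiv : A.G.E ≃ B.G.E
  src_eq : ∀ e, B.G.src (edgeEquiv e) = (A.G.src e).map nodeEquiv
  tgt_eq : ∀ e, B.G.tgt (edgeEquiv e) = (A.G.tgt e).map nodeEquiv
  inp_eq : ∀ x, nodeEquiv (A.inp x) = B.inp x
  out_eq : ∀ y, nodeEquiv (A.out y) = B.out y

/-- Two cospans are isomorphic if there is an isomorphism between them. -/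
def Cospan.Isomorphic {m n : Type} (A B : Cospan m n) : Prop := Nonempty (CospanIso A B)

/-- A homomorphism of hypergraphs: maps nodes to nodes and hyperedges to
hyperedges, preserving the ordered lists of sources and targets. -/
structure HypHom (G H : Hyp) where
  nodeMap : G.V → H.V
  edgeMap : G.E → H.E
  src_eq : ∀ e, H.src (edgeMap e) = (G.src e).map nodeMap
  tgt_eq : ∀ e, H.tgt (edgeMap e) = (G.tgt e).map nodeMap

/-- The image of a hypergraph homomorphism, as a subhypergraph of the codomain. -/
def HypHom.image {G H : Hyp} (f : HypHom G H) : SubHyp H where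
  nodes := Set.range f.nodeMap
  edges := Set.range f.edgeMap
  src_mem := by
    rintro e ⟨e', rfl⟩ v hv
    rw [f.src_eq] at hv
    rcases List.mem_map.mp hv with ⟨w, -, rfl⟩
    exact ⟨w, rfl⟩
  tgt_mem := by
    rintro e ⟨e', rfl⟩ v hv
    rw [f.tgt_eq] at hv
    rcases List.mem_map.mp hv with ⟨w, -, rfl⟩
    exact ⟨w, rfl⟩



/-!
Since both legs of a monogamous cospan are injective, the pushout `G +_n H` identifies
nothing but the pairs `A.out k ~ B.inp k`: every other node of the composite has exactly one
preimage, in `G` or in `H`. The hyperedges of the composite are those of `G` and of `H`, so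
the in- and out-incidences of a node are those of its preimages. At a glued node the
in-incidences all come from `G`, because `B.inp k` has in-degree `0` in `H`, and the
out-incidences all come from `H`, because `A.out k` has out-degree `0` in `G`. Hence every
degree condition of the composite is one of `G` or of `H`.
-/

open Function

section Gluing

variable {n α β : Type*} {f : n → α} {g : n → β}

/-- `Cospan.comp` is the quotient by `GlueRel A.out B.inp`. -/
def GlueRel (f : n → α) (g : n → β) (x y : α ⊕ β) : Prop :=
  ∃ k, x = .inl (f k) ∧ y = .inr (g k)

theorem equivalence_eq_or_glueRel (hf : Injective f) (hg : Injective g) :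
    Equivalence fun x y => x = y ∨ GlueRel f g x y ∨ GlueRel f g y x := by
  refine ⟨fun _ => .inl rfl, fun h => by tauto, ?_⟩
  rintro x y z (rfl | ⟨k, rfl, rfl⟩ | ⟨k, rfl, rfl⟩) (rfl | ⟨l, h, rfl⟩ | ⟨l, rfl, h⟩) <;>
    simp_all [GlueRel, hf.eq_iff, hg.eq_iff]

theorem quot_mk_glueRel_eq_iff (hf : Injective f) (hg : Injective g) {x y : α ⊕ β} :
    Quot.mk (GlueRel f g) x = Quot.mk _ y ↔ x = y ∨ GlueRel f g x y ∨ GlueRel f g y x := by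
  refine ⟨fun h => ?_, ?_⟩
  · exact (equivalence_eq_or_glueRel hf hg).eqvGen_iff.1 <|
      Relation.EqvGen.mono (fun _ _ h => Or.inr (Or.inl h)) _ _ (Quot.eqvGen_exact h)
  · rintro (rfl | h | h)
    exacts [rfl, Quot.sound h, (Quot.sound h).symm]

end Gluing

theorem eq_image_prodMap_inl {α β γ : Type*} {T : Set ((α ⊕ β) × γ)} {S : Set (α × γ)}
    (hl : ∀ a c, (Sum.inl a, c) ∈ T ↔ (a, c) ∈ S) (hr : ∀ b c, (Sum.inr b, c) ∉ T) :
    T = Prod.map Sum.inl id '' S := by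
  ext ⟨a | b, c⟩
  · simp [hl]
  · simp [hr]

theorem eq_image_prodMap_inr {α β γ : Type*} {T : Set ((α ⊕ β) × γ)} {S : Set (β × γ)}
    (hl : ∀ a c, (Sum.inl a, c) ∉ T) (hr : ∀ b c, (Sum.inr b, c) ∈ T ↔ (b, c) ∈ S) :
    T = Prod.map Sum.inr id '' S := by
  ext ⟨a | b, c⟩
  · simp [hl]
  · simp [hr]

theorem _root_.Function.Injective.existsUnique_mem_image_iff {α β : Type*} {f : α → β}
    (hf : Injective f) {s : Set α} :
    (∃! b, b ∈ f '' s) ↔ ∃! a, a ∈ s := by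
  refine ⟨?_, fun ⟨a, ha, h⟩ => ⟨f a, ⟨a, ha, rfl⟩, ?_⟩⟩
  · rintro ⟨_, ⟨a, ha, rfl⟩, h⟩
    exact ⟨a, ha, fun a' ha' => hf (h _ ⟨a', ha', rfl⟩)⟩
  · rintro _ ⟨a', ha', rfl⟩
    rw [h a' ha']

namespace Cospan

variable {m n p : Type} (A : Cospan m n) (B : Cospan n p)

def compInl (a : A.G.V) : (A.comp B).G.V := Quot.mk (GlueRel A.out B.inp) (.inl a)

def compInr (b : B.G.V) : (A.comp B).G.V := Quot.mk (GlueRel A.out B.inp) (.inr b)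

theorem comp_inp (x : m) : (A.comp B).inp x = A.compInl B (A.inp x) := rfl

theorem comp_out (y : p) : (A.comp B).out y = A.compInr B (B.out y) := rfl

theorem compInl_out (k : n) : A.compInl B (A.out k) = A.compInr B (B.inp k) :=
  Quot.sound ⟨k, rfl, rfl⟩

theorem compInl_or_compInr (q : (A.comp B).G.V) :
    (∃ a, A.compInl B a = q) ∨ ∃ b, A.compInr B b = q := by
  obtain ⟨a | b, rfl⟩ := Quot.exists_rep q
  exacts [.inl ⟨a, rfl⟩, .inr ⟨b, rfl⟩]

theorem exists_compInl_or_compInr_notMem_range_inp (q : (A.comp B).G.V) :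
    (∃ a, A.compInl B a = q) ∨ ∃ b ∉ Set.range B.inp, A.compInr B b = q := by
  obtain ⟨a, rfl⟩ | ⟨b, rfl⟩ := A.compInl_or_compInr B q
  · exact .inl ⟨a, rfl⟩
  by_cases hb : b ∈ Set.range B.inp
  · obtain ⟨k, rfl⟩ := hb
    exact .inl ⟨A.out k, compInl_out A B k⟩
  · exact .inr ⟨b, hb, rfl⟩

theorem exists_compInr_or_compInl_notMem_range_out (q : (A.comp B).G.V) :
    (∃ b, A.compInr B b = q) ∨ ∃ a ∉ Set.range A.out, A.compInl B a = q := by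
  obtain ⟨a, rfl⟩ | ⟨b, rfl⟩ := A.compInl_or_compInr B q
  · by_cases ha : a ∈ Set.range A.out
    · obtain ⟨k, rfl⟩ := ha
      exact .inl ⟨B.inp k, (compInl_out A B k).symm⟩
    · exact .inr ⟨a, ha, rfl⟩
  · exact .inl ⟨b, rfl⟩

theorem mem_comp_inPairs_inl {q : (A.comp B).G.V} {e : A.G.E} {i : ℕ} :
    (.inl e, i) ∈ (A.comp B).G.inPairs q ↔
      ∃ a, (e, i) ∈ A.G.inPairs a ∧ A.compInl B a = q := by
  change ((A.G.tgt e).map (A.compInl B))[i]? = some q ↔ _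
  rw [List.getElem?_map, Option.map_eq_some_iff]
  rfl

theorem mem_comp_inPairs_inr {q : (A.comp B).G.V} {e : B.G.E} {i : ℕ} :
    (.inr e, i) ∈ (A.comp B).G.inPairs q ↔
      ∃ b, (e, i) ∈ B.G.inPairs b ∧ A.compInr B b = q := by
  change ((B.G.tgt e).map (A.compInr B))[i]? = some q ↔ _
  rw [List.getElem?_map, Option.map_eq_some_iff]
  rfl

theorem mem_comp_outPairs_inl {q : (A.comp B).G.V} {e : A.G.E} {i : ℕ} :
    (.inl e, i) ∈ (A.comp B).G.outPairs q ↔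
      ∃ a, (e, i) ∈ A.G.outPairs a ∧ A.compInl B a = q := by
  change ((A.G.src e).map (A.compInl B))[i]? = some q ↔ _
  rw [List.getElem?_map, Option.map_eq_some_iff]
  rfl

theorem mem_comp_outPairs_inr {q : (A.comp B).G.V} {e : B.G.E} {i : ℕ} :
    (.inr e, i) ∈ (A.comp B).G.outPairs q ↔
      ∃ b, (e, i) ∈ B.G.outPairs b ∧ A.compInr B b = q := by
  change ((B.G.src e).map (A.compInr B))[i]? = some q ↔ _
  rw [List.getElem?_map, Option.map_eq_some_iff]
  rfl

variable {A B}

theorem compInl_injective (hAout : Injective A.out) (hBinp : Injective B.inp) :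
    Injective (A.compInl B) := fun _ _ h => by
  simpa [GlueRel] using (quot_mk_glueRel_eq_iff hAout hBinp).1 h

theorem compInr_injective (hAout : Injective A.out) (hBinp : Injective B.inp) :
    Injective (A.compInr B) := fun _ _ h => by
  simpa [GlueRel] using (quot_mk_glueRel_eq_iff hAout hBinp).1 h

theorem compInl_eq_compInr_iff (hAout : Injective A.out) (hBinp : Injective B.inp)
    {a : A.G.V} {b : B.G.V} :
    A.compInl B a = A.compInr B b ↔ ∃ k, a = A.out k ∧ b = B.inp k :=
  (quot_mk_glueRel_eq_iff hAout hBinp).trans (by simp [GlueRel])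

theorem comp_inPairs_compInl (hAout : Injective A.out) (hBinp : Injective B.inp)
    (hBinZero : ∀ v ∈ Set.range B.inp, B.G.inDegZero v) (a : A.G.V) :
    (A.comp B).G.inPairs (A.compInl B a) = Prod.map Sum.inl id '' A.G.inPairs a := by
  refine eq_image_prodMap_inl (fun e i => (mem_comp_inPairs_inl A B).trans ?_) fun e i h => ?_
  · simp [(compInl_injective hAout hBinp).eq_iff]
  · obtain ⟨b, hb, hab⟩ := (mem_comp_inPairs_inr A B).1 h
    obtain ⟨k, -, rfl⟩ := (compInl_eq_compInr_iff hAout hBinp).1 hab.symm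
    exact Set.eq_empty_iff_forall_notMem.1 (hBinZero _ ⟨k, rfl⟩) _ hb

theorem comp_inPairs_compInr (hAout : Injective A.out) (hBinp : Injective B.inp) {b : B.G.V}
    (hb : b ∉ Set.range B.inp) :
    (A.comp B).G.inPairs (A.compInr B b) = Prod.map Sum.inr id '' B.G.inPairs b := by
  refine eq_image_prodMap_inr (fun e i h => ?_) fun e i => (mem_comp_inPairs_inr A B).trans ?_
  · obtain ⟨a, -, hab⟩ := (mem_comp_inPairs_inl A B).1 h
    obtain ⟨k, -, rfl⟩ := (compInl_eq_compInr_iff hAout hBinp).1 hab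
    exact hb ⟨k, rfl⟩
  · simp [(compInr_injective hAout hBinp).eq_iff]

theorem comp_outPairs_compInr (hAout : Injective A.out) (hBinp : Injective B.inp)
    (hAoutZero : ∀ v ∈ Set.range A.out, A.G.outDegZero v) (b : B.G.V) :
    (A.comp B).G.outPairs (A.compInr B b) = Prod.map Sum.inr id '' B.G.outPairs b := by
  refine eq_image_prodMap_inr (fun e i h => ?_) fun e i => (mem_comp_outPairs_inr A B).trans ?_
  · obtain ⟨a, ha, hab⟩ := (mem_comp_outPairs_inl A B).1 h
    obtain ⟨k, rfl, -⟩ := (compInl_eq_compInr_iff hAout hBinp).1 hab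
    exact Set.eq_empty_iff_forall_notMem.1 (hAoutZero _ ⟨k, rfl⟩) _ ha
  · simp [(compInr_injective hAout hBinp).eq_iff]

theorem comp_outPairs_compInl (hAout : Injective A.out) (hBinp : Injective B.inp) {a : A.G.V}
    (ha : a ∉ Set.range A.out) :
    (A.comp B).G.outPairs (A.compInl B a) = Prod.map Sum.inl id '' A.G.outPairs a := by
  refine eq_image_prodMap_inl (fun e i => (mem_comp_outPairs_inl A B).trans ?_) fun e i h => ?_
  · simp [(compInl_injective hAout hBinp).eq_iff]
  · obtain ⟨b, -, hab⟩ := (mem_comp_outPairs_inr A B).1 h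
    obtain ⟨k, rfl, -⟩ := (compInl_eq_compInr_iff hAout hBinp).1 hab.symm
    exact ha ⟨k, rfl⟩

end Cospan

theorem composition_monogamous_general {m n p : Type}
    (A : Cospan m n) (B : Cospan n p)
    (hA : A.Monogamous) (hB : B.Monogamous) :
    (A.comp B).Monogamous := by
  obtain ⟨hAinp, hAout, hAinZero, hAinOne, hAoutZero, hAoutOne⟩ := hA
  obtain ⟨hBinp, hBout, hBinZero, hBinOne, hBoutZero, hBoutOne⟩ := hB
  refine ⟨(Cospan.compInl_injective hAout hBinp).comp hAinp,
    (Cospan.compInr_injective hAout hBinp).comp hBout, ?_, fun q hq => ?_, ?_, fun q hq => ?_⟩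
  · rintro _ ⟨x, rfl⟩
    rw [Hyp.inDegZero, Cospan.comp_inp, Cospan.comp_inPairs_compInl hAout hBinp hBinZero]
    exact Set.image_eq_empty.2 (hAinZero _ ⟨x, rfl⟩)
  · obtain ⟨a, rfl⟩ | ⟨b, hb, rfl⟩ := A.exists_compInl_or_compInr_notMem_range_inp B q
    · have ha : a ∉ Set.range A.inp := fun ⟨x, hx⟩ => hq ⟨x, hx ▸ rfl⟩
      rw [Hyp.inDegOne, Cospan.comp_inPairs_compInl hAout hBinp hBinZero]
      exact (Sum.inl_injective.prodMap injective_id).existsUnique_mem_image_iff.2 (hAinOne a ha)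
    · rw [Hyp.inDegOne, Cospan.comp_inPairs_compInr hAout hBinp hb]
      exact (Sum.inr_injective.prodMap injective_id).existsUnique_mem_image_iff.2 (hBinOne b hb)
  · rintro _ ⟨y, rfl⟩
    rw [Hyp.outDegZero, Cospan.comp_out, Cospan.comp_outPairs_compInr hAout hBinp hAoutZero]
    exact Set.image_eq_empty.2 (hBoutZero _ ⟨y, rfl⟩)
  · obtain ⟨b, rfl⟩ | ⟨a, ha, rfl⟩ := A.exists_compInr_or_compInl_notMem_range_out B q
    · have hb : b ∉ Set.range B.out := fun ⟨y, hy⟩ => hq ⟨y, hy ▸ rfl⟩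
      rw [Hyp.outDegOne, Cospan.comp_outPairs_compInr hAout hBinp hAoutZero]
      exact (Sum.inr_injective.prodMap injective_id).existsUnique_mem_image_iff.2 (hBoutOne b hb)
    · rw [Hyp.outDegOne, Cospan.comp_outPairs_compInl hAout hBinp ha]
      exact (Sum.inl_injective.prodMap injective_id).existsUnique_mem_image_iff.2 (hAoutOne a ha)

/-- If `m → G ← n` and `n → H ← p` are monogamous cospans of
hypergraphs with discrete interfaces, then their composite cospan
`m → G +_n H ← p` (obtained by pushout, gluing along the common interface `n`)
is again monogamous. -/
theorem composition_monogamous {m n p : Type} [Finite m] [Finite n] [Finite p]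
    (A : Cospan m n) (B : Cospan n p)
    (hA : A.Monogamous) (hB : B.Monogamous) :
    (A.comp B).Monogamous :=
  composition_monogamous_general A B hA hB

end SDRT
end

section
/- (Decomposition Lemma) Let m → G ← n be a monogamous acyclic cospan with finite carrier and let L be a convex subhypergraph of G. Then there exist a finite set k and a unique cospan i → L ← j such that m → G ← n is isomorphic to the composite ( m → C1 ← i+k ) ; ( (k → k ← k, identity legs) ⊕ (i → L ← j) ) ; ( j+k → C2 ← n ) for some subhypergraphs C1, C2 of G, where all cospans in this factorisation are monogamous and acyclic. -/
namespace SDRT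

/-!
Split the hyperedges outside `L` into those reachable from a node of `L` (the part `C₂`
after `L`) and the others (the part `C₁` before `L`). By convexity no hyperedge of `C₂`
feeds back into `L`, and by monogamy every node other than an input has exactly one
producer and every node other than an output exactly one consumer; hence every node lies
in `L`, in `C₁` (as an input or a target of a hyperedge of `C₁`) or in `C₂` (as an output
or a source of a hyperedge of `C₂`). The nodes in both `C₁` and `C₂` but outside `L` are
the wires `k` bypassing `L`, and gluing the three parts along their shared nodes gives back
`G`. The interfaces of `L` are forced, since in a monogamous cospan the input and output
nodes are exactly the nodes of in- and out-degree 0.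
-/

namespace Hyp

variable {G : Hyp}

lemma mem_tgt_of_mem_inPairs {v : G.V} {p : G.E × ℕ} (hp : p ∈ G.inPairs v) : v ∈ G.tgt p.1 :=
  List.mem_of_getElem? hp

lemma mem_src_of_mem_outPairs {v : G.V} {p : G.E × ℕ} (hp : p ∈ G.outPairs v) :
    v ∈ G.src p.1 :=
  List.mem_of_getElem? hp

lemma exists_mem_inPairs_of_mem_tgt {v : G.V} {e : G.E} (h : v ∈ G.tgt e) :
    ∃ i, (e, i) ∈ G.inPairs v :=
  List.mem_iff_getElem?.1 h

lemma exists_mem_outPairs_of_mem_src {v : G.V} {e : G.E} (h : v ∈ G.src e) :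
    ∃ i, (e, i) ∈ G.outPairs v :=
  List.mem_iff_getElem?.1 h

def ReachesEdge (G : Hyp) (v : G.V) (e : G.E) : Prop :=
  ∃ l, ∃ hne : l ≠ [], l.IsChain G.Successor ∧ v ∈ G.src (l.head hne) ∧ l.getLast hne = e

lemma reachesEdge_of_mem_src {v : G.V} {e : G.E} (h : v ∈ G.src e) : G.ReachesEdge v e :=
  ⟨[e], List.cons_ne_nil e [], List.isChain_singleton e, h, rfl⟩

lemma ReachesEdge.successor {v : G.V} {e e' : G.E} (h : G.ReachesEdge v e)
    (hs : G.Successor e e') : G.ReachesEdge v e' := by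
  obtain ⟨l, hne, hch, hhd, rfl⟩ := h
  refine ⟨l ++ [e'], by simp, hch.append (List.isChain_singleton e') ?_, ?_, by simp⟩
  · intro x hx y hy
    rw [List.getLast?_eq_some_getLast hne, Option.mem_some_iff] at hx
    rw [List.head?_cons, Option.mem_some_iff] at hy
    exact hx ▸ hy ▸ hs
  · rwa [List.head_append_of_ne_nil hne]

lemma ReachesEdge.pathFrom {v w : G.V} {e : G.E} (h : G.ReachesEdge v e) (hw : w ∈ G.tgt e) :
    ∃ l, G.PathFrom l v w ∧ e ∈ l := by
  obtain ⟨l, hne, hch, hhd, rfl⟩ := h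
  exact ⟨l, ⟨hne, hch, hhd, hw⟩, List.getLast_mem hne⟩

end Hyp

namespace SubHyp

variable {G : Hyp} (S : SubHyp G)

lemma Convex.mem_edges_of_reachesEdge {S : SubHyp G} (hS : S.Convex) {v w : G.V} {e : G.E}
    (hv : v ∈ S.nodes) (h : G.ReachesEdge v e) (hw : w ∈ G.tgt e) (hwS : w ∈ S.nodes) :
    e ∈ S.edges :=
  let ⟨l, hl, he⟩ := h.pathFrom hw
  hS v hv w hwS l hl e he

lemma map_src_toHyp {X : Type*} {f : S.nodes → X} {g : G.V → X}
    (hfg : ∀ v (hv : v ∈ S.nodes), f ⟨v, hv⟩ = g v) (e : S.edges) :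
    (S.toHyp.src e).map f = (G.src e.1).map g := by
  simp only [SubHyp.toHyp, List.map_pmap, hfg, List.pmap_eq_map]

lemma map_tgt_toHyp {X : Type*} {f : S.nodes → X} {g : G.V → X}
    (hfg : ∀ v (hv : v ∈ S.nodes), f ⟨v, hv⟩ = g v) (e : S.edges) :
    (S.toHyp.tgt e).map f = (G.tgt e.1).map g := by
  simp only [SubHyp.toHyp, List.map_pmap, hfg, List.pmap_eq_map]

lemma mem_src_of_mem_src_toHyp {e : S.edges} {w : S.nodes} (h : w ∈ S.toHyp.src e) :
    w.1 ∈ G.src e.1 := by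
  have h_map := S.map_src_toHyp (f := Subtype.val) (g := id) (fun _ _ => rfl) e
  rw [List.map_id] at h_map
  exact h_map ▸ List.mem_map_of_mem h

lemma mem_tgt_of_mem_tgt_toHyp {e : S.edges} {w : S.nodes} (h : w ∈ S.toHyp.tgt e) :
    w.1 ∈ G.tgt e.1 := by
  have h_map := S.map_tgt_toHyp (f := Subtype.val) (g := id) (fun _ _ => rfl) e
  rw [List.map_id] at h_map
  exact h_map ▸ List.mem_map_of_mem h

lemma acyclic_toHyp (hG : G.Acyclic) : S.toHyp.Acyclic := by
  rintro (v : S.nodes) (l : List S.edges) ⟨hne, hch, hhd, hlast⟩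
  refine hG v.1 (l.map Subtype.val) ⟨mt List.map_eq_nil_iff.1 hne, ?_, ?_, ?_⟩
  · refine (List.isChain_map _).2 (hch.imp fun {e e'} ⟨w, hwt, hws⟩ => ?_)
    exact ⟨w.1, S.mem_tgt_of_mem_tgt_toHyp hwt, S.mem_src_of_mem_src_toHyp hws⟩
  · rw [List.head_map]
    exact S.mem_src_of_mem_src_toHyp hhd
  · rw [List.getLast_map]
    exact S.mem_tgt_of_mem_tgt_toHyp hlast

lemma mem_inPairs_toHyp {w : S.nodes} {p : S.edges × ℕ} :
    p ∈ S.toHyp.inPairs w ↔ (p.1.1, p.2) ∈ G.inPairs w.1 := by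
  change (List.pmap _ _ _)[p.2]? = some w ↔ _
  rw [List.getElem?_pmap, Option.pmap_eq_some_iff]
  exact ⟨fun ⟨_, _, h, hw⟩ => hw ▸ h, fun h => ⟨w.1, w.2, h, rfl⟩⟩

lemma mem_outPairs_toHyp {w : S.nodes} {p : S.edges × ℕ} :
    p ∈ S.toHyp.outPairs w ↔ (p.1.1, p.2) ∈ G.outPairs w.1 := by
  change (List.pmap _ _ _)[p.2]? = some w ↔ _
  rw [List.getElem?_pmap, Option.pmap_eq_some_iff]
  exact ⟨fun ⟨_, _, h, hw⟩ => hw ▸ h, fun h => ⟨w.1, w.2, h, rfl⟩⟩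

lemma inDegZero_toHyp_iff {w : S.nodes} :
    S.toHyp.inDegZero w ↔ ∀ p ∈ G.inPairs w.1, p.1 ∉ S.edges := by
  refine ⟨fun h p hp hpS => ?_, fun h => Set.eq_empty_iff_forall_notMem.2 fun p hp => ?_⟩
  · exact Eq.subset h ((S.mem_inPairs_toHyp (p := (⟨p.1, hpS⟩, p.2))).2 hp)
  · exact h _ (S.mem_inPairs_toHyp.1 hp) p.1.2

lemma outDegZero_toHyp_iff {w : S.nodes} :
    S.toHyp.outDegZero w ↔ ∀ p ∈ G.outPairs w.1, p.1 ∉ S.edges := by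
  refine ⟨fun h p hp hpS => ?_, fun h => Set.eq_empty_iff_forall_notMem.2 fun p hp => ?_⟩
  · exact Eq.subset h ((S.mem_outPairs_toHyp (p := (⟨p.1, hpS⟩, p.2))).2 hp)
  · exact h _ (S.mem_outPairs_toHyp.1 hp) p.1.2

lemma inDegOne_toHyp {w : S.nodes} (hsub : (G.inPairs w.1).Subsingleton)
    (h : ∃ p ∈ G.inPairs w.1, p.1 ∈ S.edges) : S.toHyp.inDegOne w := by
  obtain ⟨⟨e, i⟩, hp, he⟩ := h
  refine ⟨(⟨e, he⟩, i), S.mem_inPairs_toHyp.2 hp, fun ⟨⟨e', he'⟩, i'⟩ hq => ?_⟩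
  obtain ⟨rfl, rfl⟩ := Prod.mk.inj (hsub (S.mem_inPairs_toHyp.1 hq) hp)
  rfl

lemma outDegOne_toHyp {w : S.nodes} (hsub : (G.outPairs w.1).Subsingleton)
    (h : ∃ p ∈ G.outPairs w.1, p.1 ∈ S.edges) : S.toHyp.outDegOne w := by
  obtain ⟨⟨e, i⟩, hp, he⟩ := h
  refine ⟨(⟨e, he⟩, i), S.mem_outPairs_toHyp.2 hp, fun ⟨⟨e', he'⟩, i'⟩ hq => ?_⟩
  obtain ⟨rfl, rfl⟩ := Prod.mk.inj (hsub (S.mem_outPairs_toHyp.1 hq) hp)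
  rfl

end SubHyp

namespace Cospan.Monogamous

variable {m n : Type} {A : Cospan m n} (hm : A.Monogamous)
include hm

lemma notMem_range_inp {v : A.G.V} {p : A.G.E × ℕ} (hp : p ∈ A.G.inPairs v) :
    v ∉ Set.range A.inp :=
  fun hv => Eq.subset (hm.2.2.1 v hv) hp

lemma notMem_range_out {v : A.G.V} {p : A.G.E × ℕ} (hp : p ∈ A.G.outPairs v) :
    v ∉ Set.range A.out :=
  fun hv => Eq.subset (hm.2.2.2.2.1 v hv) hp

lemma exists_mem_inPairs {v : A.G.V} (hv : v ∉ Set.range A.inp) : ∃ p, p ∈ A.G.inPairs v :=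
  (hm.2.2.2.1 v hv).exists

lemma exists_mem_outPairs {v : A.G.V} (hv : v ∉ Set.range A.out) : ∃ p, p ∈ A.G.outPairs v :=
  (hm.2.2.2.2.2 v hv).exists

lemma inPairs_subsingleton (v : A.G.V) : (A.G.inPairs v).Subsingleton := fun _ hp _ hq =>
  (hm.2.2.2.1 v (hm.notMem_range_inp hp)).unique hp hq

lemma outPairs_subsingleton (v : A.G.V) : (A.G.outPairs v).Subsingleton := fun _ hp _ hq =>
  (hm.2.2.2.2.2 v (hm.notMem_range_out hp)).unique hp hq

lemma range_inp_eq : Set.range A.inp = {v | A.G.inDegZero v} := by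
  refine Set.ext fun v => ⟨hm.2.2.1 v, fun hv => by_contra fun h => ?_⟩
  obtain ⟨p, hp⟩ := hm.exists_mem_inPairs h
  exact Eq.subset hv hp

lemma range_out_eq : Set.range A.out = {v | A.G.outDegZero v} := by
  refine Set.ext fun v => ⟨hm.2.2.2.2.1 v, fun hv => by_contra fun h => ?_⟩
  obtain ⟨p, hp⟩ := hm.exists_mem_outPairs h
  exact Eq.subset hv hp

end Cospan.Monogamous

lemma SubHyp.monogamous_cospan {m n i j : Type} {A : Cospan m n} (hm : A.Monogamous)
    (S : SubHyp A.G) {f : i → S.toHyp.V} {g : j → S.toHyp.V}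
    (hf : Function.Injective f) (hg : Function.Injective g)
    (hf_range : ∀ w, w ∈ Set.range f ↔ ∀ p ∈ A.G.inPairs w.1, p.1 ∉ S.edges)
    (hg_range : ∀ w, w ∈ Set.range g ↔ ∀ p ∈ A.G.outPairs w.1, p.1 ∉ S.edges) :
    (Cospan.mk S.toHyp f g).Monogamous := by
  refine ⟨hf, hg, fun w hw => ?_, fun w hw => ?_, fun w hw => ?_, fun w hw => ?_⟩
  · exact S.inDegZero_toHyp_iff.2 ((hf_range w).1 hw)
  · rw [hf_range] at hw
    push Not at hw
    exact S.inDegOne_toHyp (hm.inPairs_subsingleton _) hw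
  · exact S.outDegZero_toHyp_iff.2 ((hg_range w).1 hw)
  · rw [hg_range] at hw
    push Not at hw
    exact S.outDegOne_toHyp (hm.outPairs_subsingleton _) hw

/-- The leg `K ⊕ I → C` of a cospan whose interface consists of wires `K ⊆ C` and of
nodes `I` of another part `R`. -/
def sumLeg {α : Type*} {C R K : Set α} (hK : K ⊆ C) {I : Set R} (hI : ∀ v ∈ I, v.1 ∈ C) :
    K ⊕ I → C :=
  Sum.elim (Set.inclusion hK) (C.codRestrict (fun v : I => v.1.1) fun v => hI v.1 v.2)

section sumLeg

variable {α : Type*} {C R K : Set α} (hK : K ⊆ C) {I : Set R} (hI : ∀ v ∈ I, v.1 ∈ C)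

lemma sumLeg_injective (hKR : ∀ v ∈ K, v ∉ R) : Function.Injective (sumLeg hK hI) := by
  refine (Set.inclusion_injective hK).sumElim
    ((Subtype.val_injective.comp Subtype.val_injective).codRestrict _) fun a b hab => ?_
  exact hKR a.1 a.2 (congrArg Subtype.val hab ▸ b.1.2)

lemma mem_range_sumLeg {w : C} :
    w ∈ Set.range (sumLeg hK hI) ↔ w.1 ∈ K ∨ ∃ h : w.1 ∈ R, ⟨w.1, h⟩ ∈ I := by
  constructor
  · rintro ⟨a | a, rfl⟩
    exacts [Or.inl a.2, Or.inr ⟨a.1.2, a.2⟩]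
  · rintro (h | ⟨h, hI'⟩)
    exacts [⟨Sum.inl ⟨w.1, h⟩, rfl⟩, ⟨Sum.inr ⟨⟨w.1, h⟩, hI'⟩, rfl⟩]

end sumLeg

namespace Cospan

variable {m n : Type} (A : Cospan m n) (L : SubHyp A.G)

-- In the notation of the decomposition, `C₁` is `(nodesBefore, edgesBefore)`, `C₂` is
-- `(nodesAfter, edgesAfter)`, `k` is `bypass`, and `i → L ← j` is `middleCospan`.
def edgesAfter : Set A.G.E := {e | e ∉ L.edges ∧ ∃ v ∈ L.nodes, A.G.ReachesEdge v e}

def edgesBefore : Set A.G.E := {e | e ∉ L.edges ∧ e ∉ A.edgesAfter L}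

def nodesBefore : Set A.G.V :=
  Set.range A.inp ∪ {v | ∃ p ∈ A.G.inPairs v, p.1 ∈ A.edgesBefore L}

def nodesAfter : Set A.G.V :=
  Set.range A.out ∪ {v | ∃ p ∈ A.G.outPairs v, p.1 ∈ A.edgesAfter L}

def bypass : Set A.G.V := (A.nodesBefore L ∩ A.nodesAfter L) \ L.nodes

def inBoundary : Set L.toHyp.V := {v | v.1 ∈ A.nodesBefore L}

def outBoundary : Set L.toHyp.V := {v | v.1 ∈ A.nodesAfter L}

def middleCospan : Cospan (A.inBoundary L) (A.outBoundary L) :=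
  ⟨L.toHyp, Subtype.val, Subtype.val⟩

variable {A L} {v : A.G.V} {e : A.G.E}

lemma mem_edgesAfter_of_mem_src (hv : v ∈ L.nodes) (hs : v ∈ A.G.src e) (he : e ∉ L.edges) :
    e ∈ A.edgesAfter L :=
  ⟨he, v, hv, Hyp.reachesEdge_of_mem_src hs⟩

lemma mem_edgesAfter_of_successor {e' : A.G.E} (he : e ∈ A.edgesAfter L)
    (hs : A.G.Successor e e') (he' : e' ∉ L.edges) : e' ∈ A.edgesAfter L :=
  ⟨he', he.2.imp fun _ ⟨hv, hr⟩ => ⟨hv, hr.successor hs⟩⟩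

lemma notMem_nodes_of_mem_src_of_mem_edgesBefore (he : e ∈ A.edgesBefore L)
    (hs : v ∈ A.G.src e) : v ∉ L.nodes :=
  fun hv => he.2 (mem_edgesAfter_of_mem_src hv hs he.1)

lemma notMem_nodes_of_mem_tgt_of_mem_edgesAfter (hconv : L.Convex) (he : e ∈ A.edgesAfter L)
    (ht : v ∈ A.G.tgt e) : v ∉ L.nodes := fun hv =>
  let ⟨_, hu, hr⟩ := he.2
  he.1 (hconv.mem_edges_of_reachesEdge hu hr ht hv)

lemma mem_nodesBefore_of_mem_tgt (he : e ∈ A.edgesBefore L) (ht : v ∈ A.G.tgt e) :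
    v ∈ A.nodesBefore L :=
  let ⟨i, hi⟩ := Hyp.exists_mem_inPairs_of_mem_tgt ht
  Or.inr ⟨(e, i), hi, he⟩

lemma mem_nodesAfter_of_mem_src (he : e ∈ A.edgesAfter L) (hs : v ∈ A.G.src e) :
    v ∈ A.nodesAfter L :=
  let ⟨i, hi⟩ := Hyp.exists_mem_outPairs_of_mem_src hs
  Or.inr ⟨(e, i), hi, he⟩

lemma mem_nodesBefore_of_mem_src (hm : A.Monogamous) (he : e ∈ A.edgesBefore L)
    (hs : v ∈ A.G.src e) : v ∈ A.nodesBefore L := by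
  by_cases hv : v ∈ Set.range A.inp
  · exact Or.inl hv
  obtain ⟨p, hp⟩ := hm.exists_mem_inPairs hv
  have ht := Hyp.mem_tgt_of_mem_inPairs hp
  refine Or.inr ⟨p, hp, fun hpL => ?_, fun hpA => ?_⟩
  · exact notMem_nodes_of_mem_src_of_mem_edgesBefore he hs (L.tgt_mem _ hpL v ht)
  · exact he.2 (mem_edgesAfter_of_successor hpA ⟨v, ht, hs⟩ he.1)

lemma mem_nodesAfter_of_mem_tgt (hm : A.Monogamous) (hconv : L.Convex)
    (he : e ∈ A.edgesAfter L) (ht : v ∈ A.G.tgt e) : v ∈ A.nodesAfter L := by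
  by_cases hv : v ∈ Set.range A.out
  · exact Or.inl hv
  obtain ⟨p, hp⟩ := hm.exists_mem_outPairs hv
  have hs := Hyp.mem_src_of_mem_outPairs hp
  refine Or.inr ⟨p, hp, mem_edgesAfter_of_successor he ⟨v, ht, hs⟩ fun hpL => ?_⟩
  exact notMem_nodes_of_mem_tgt_of_mem_edgesAfter hconv he ht (L.src_mem _ hpL v hs)

lemma mem_range_inp_iff_of_mem_nodesBefore (hm : A.Monogamous) (hv : v ∈ A.nodesBefore L) :
    v ∈ Set.range A.inp ↔ ∀ p ∈ A.G.inPairs v, p.1 ∉ A.edgesBefore L := by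
  refine ⟨fun h p hp _ => hm.notMem_range_inp hp h, fun h => ?_⟩
  rcases hv with hv | ⟨p, hp, hpB⟩
  exacts [hv, absurd hpB (h p hp)]

lemma mem_range_out_iff_of_mem_nodesAfter (hm : A.Monogamous) (hv : v ∈ A.nodesAfter L) :
    v ∈ Set.range A.out ↔ ∀ p ∈ A.G.outPairs v, p.1 ∉ A.edgesAfter L := by
  refine ⟨fun h p hp _ => hm.notMem_range_out hp h, fun h => ?_⟩
  rcases hv with hv | ⟨p, hp, hpA⟩
  exacts [hv, absurd hpA (h p hp)]

lemma mem_nodes_or_mem_nodesAfter_iff (hm : A.Monogamous) :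
    v ∈ L.nodes ∨ v ∈ A.nodesAfter L ↔ ∀ p ∈ A.G.outPairs v, p.1 ∉ A.edgesBefore L := by
  constructor
  · rintro (hv | hv | ⟨q, hq, hqA⟩) p hp hpB
    · exact notMem_nodes_of_mem_src_of_mem_edgesBefore hpB (Hyp.mem_src_of_mem_outPairs hp) hv
    · exact hm.notMem_range_out hp hv
    · exact hpB.2 (hm.outPairs_subsingleton v hq hp ▸ hqA)
  · intro h
    by_cases hv : v ∈ Set.range A.out
    · exact Or.inr (Or.inl hv)
    obtain ⟨p, hp⟩ := hm.exists_mem_outPairs hv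
    by_cases hpL : p.1 ∈ L.edges
    · exact Or.inl (L.src_mem _ hpL v (Hyp.mem_src_of_mem_outPairs hp))
    · exact Or.inr (Or.inr ⟨p, hp, by_contra fun hpA => h p hp ⟨hpL, hpA⟩⟩)

lemma mem_nodes_or_mem_nodesBefore_iff (hm : A.Monogamous) (hconv : L.Convex) :
    v ∈ L.nodes ∨ v ∈ A.nodesBefore L ↔ ∀ p ∈ A.G.inPairs v, p.1 ∉ A.edgesAfter L := by
  constructor
  · rintro (hv | hv | ⟨q, hq, hqB⟩) p hp hpA
    · exact notMem_nodes_of_mem_tgt_of_mem_edgesAfter hconv hpA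
        (Hyp.mem_tgt_of_mem_inPairs hp) hv
    · exact hm.notMem_range_inp hp hv
    · exact (hm.inPairs_subsingleton v hq hp ▸ hqB).2 hpA
  · intro h
    by_cases hv : v ∈ Set.range A.inp
    · exact Or.inr (Or.inl hv)
    obtain ⟨p, hp⟩ := hm.exists_mem_inPairs hv
    by_cases hpL : p.1 ∈ L.edges
    · exact Or.inl (L.tgt_mem _ hpL v (Hyp.mem_tgt_of_mem_inPairs hp))
    · exact Or.inr (Or.inr ⟨p, hp, hpL, h p hp⟩)

lemma mem_nodesBefore_iff_of_mem_nodes (hm : A.Monogamous) (hconv : L.Convex)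
    (hv : v ∈ L.nodes) : v ∈ A.nodesBefore L ↔ ∀ p ∈ A.G.inPairs v, p.1 ∉ L.edges := by
  constructor
  · rintro (hr | ⟨q, hq, hqB⟩) p hp
    · exact absurd hr (hm.notMem_range_inp hp)
    · exact (hm.inPairs_subsingleton v hq hp ▸ hqB).1
  · intro h
    by_cases hr : v ∈ Set.range A.inp
    · exact Or.inl hr
    obtain ⟨p, hp⟩ := hm.exists_mem_inPairs hr
    refine Or.inr ⟨p, hp, h p hp, fun hpA => ?_⟩
    exact notMem_nodes_of_mem_tgt_of_mem_edgesAfter hconv hpA (Hyp.mem_tgt_of_mem_inPairs hp) hv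

lemma mem_nodesAfter_iff_of_mem_nodes (hm : A.Monogamous) (hv : v ∈ L.nodes) :
    v ∈ A.nodesAfter L ↔ ∀ p ∈ A.G.outPairs v, p.1 ∉ L.edges := by
  constructor
  · rintro (hr | ⟨q, hq, hqA⟩) p hp
    · exact absurd hr (hm.notMem_range_out hp)
    · exact (hm.outPairs_subsingleton v hq hp ▸ hqA).1
  · intro h
    by_cases hr : v ∈ Set.range A.out
    · exact Or.inl hr
    obtain ⟨p, hp⟩ := hm.exists_mem_outPairs hr
    exact Or.inr ⟨p, hp, mem_edgesAfter_of_mem_src hv (Hyp.mem_src_of_mem_outPairs hp) (h p hp)⟩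

lemma mem_nodesAfter_of_notMem (hm : A.Monogamous) (hconv : L.Convex) (hL : v ∉ L.nodes)
    (hB : v ∉ A.nodesBefore L) : v ∈ A.nodesAfter L := by
  have h := mt (mem_nodes_or_mem_nodesBefore_iff hm hconv).2 (not_or.2 ⟨hL, hB⟩)
  push Not at h
  obtain ⟨p, hp, hpA⟩ := h
  exact mem_nodesAfter_of_mem_tgt hm hconv hpA (Hyp.mem_tgt_of_mem_inPairs hp)

end Cospan

namespace Cospan.Monogamous

variable {m n : Type} {A : Cospan m n} (hm : A.Monogamous) {L : SubHyp A.G} (hconv : L.Convex)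

variable (L) in
def before : SubHyp A.G where
  nodes := A.nodesBefore L
  edges := A.edgesBefore L
  src_mem _ he _ hv := mem_nodesBefore_of_mem_src hm he hv
  tgt_mem _ he _ hv := mem_nodesBefore_of_mem_tgt he hv

def after : SubHyp A.G where
  nodes := A.nodesAfter L
  edges := A.edgesAfter L
  src_mem _ he _ hv := mem_nodesAfter_of_mem_src he hv
  tgt_mem _ he _ hv := mem_nodesAfter_of_mem_tgt hm hconv he hv

variable (L) in
def beforeCospan : Cospan m (A.bypass L ⊕ A.inBoundary L) where
  G := (hm.before L).toHyp
  inp := Set.codRestrict A.inp _ fun x => Or.inl ⟨x, rfl⟩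
  out := sumLeg (fun _ hv => hv.1.1) fun _ hv => hv

def afterCospan : Cospan (A.bypass L ⊕ A.outBoundary L) n where
  G := (hm.after hconv).toHyp
  inp := sumLeg (fun _ hv => hv.1.2) fun _ hv => hv
  out := Set.codRestrict A.out _ fun y => Or.inl ⟨y, rfl⟩

lemma beforeCospan_monogamous : (hm.beforeCospan L).Monogamous := by
  refine (hm.before L).monogamous_cospan hm (hm.1.codRestrict _)
    (sumLeg_injective _ _ fun _ hv => hv.2) (fun w => ?_) (fun w => ?_)
  · exact (Set.ext_iff.1 (Set.range_codRestrict _) w).trans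
      (mem_range_inp_iff_of_mem_nodesBefore hm w.2)
  · refine (mem_range_sumLeg _ _).trans (Iff.trans ?_ (mem_nodes_or_mem_nodesAfter_iff hm))
    have hw := w.2
    simp only [Cospan.bypass, Cospan.inBoundary, Set.mem_sdiff, Set.mem_inter_iff]
    tauto

lemma afterCospan_monogamous : (hm.afterCospan hconv).Monogamous := by
  refine (hm.after hconv).monogamous_cospan hm
    (sumLeg_injective _ _ fun _ hv => hv.2) (hm.2.1.codRestrict _) (fun w => ?_) (fun w => ?_)
  · refine (mem_range_sumLeg _ _).trans (Iff.trans ?_ (mem_nodes_or_mem_nodesBefore_iff hm hconv))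
    have hw := w.2
    simp only [Cospan.bypass, Cospan.outBoundary, Set.mem_sdiff, Set.mem_inter_iff]
    tauto
  · exact (Set.ext_iff.1 (Set.range_codRestrict _) w).trans
      (mem_range_out_iff_of_mem_nodesAfter hm w.2)

include hm hconv in
lemma middleCospan_monogamous : (A.middleCospan L).Monogamous := by
  refine L.monogamous_cospan hm Subtype.val_injective Subtype.val_injective
    (fun w => ?_) (fun w => ?_)
  · rw [Subtype.range_coe]
    exact mem_nodesBefore_iff_of_mem_nodes hm hconv w.2
  · rw [Subtype.range_coe]
    exact mem_nodesAfter_iff_of_mem_nodes hm w.2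

def composite : Cospan m n :=
  ((hm.beforeCospan L).comp ((idCospan (A.bypass L)).tensor (A.middleCospan L))).comp
    (hm.afterCospan hconv)

def ofComposite : (hm.composite hconv).G.V → A.G.V :=
  Quot.lift
    (Sum.elim
      (Quot.lift (Sum.elim Subtype.val (Sum.elim Subtype.val Subtype.val))
        (by rintro _ _ ⟨k, rfl, rfl⟩; cases k <;> rfl))
      Subtype.val)
    (by rintro _ _ ⟨k, rfl, rfl⟩; cases k <;> rfl)

-- The pushouts identify the copies of a node shared by several parts, so the branch taken
-- here for such a node does not matter.
open Classical in
noncomputable def toComposite (v : A.G.V) : (hm.composite hconv).G.V :=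
  if h : v ∈ L.nodes then Quot.mk _ (Sum.inl (Quot.mk _ (Sum.inr (Sum.inr ⟨v, h⟩))))
  else if hB : v ∈ A.nodesBefore L then Quot.mk _ (Sum.inl (Quot.mk _ (Sum.inl ⟨v, hB⟩)))
  else Quot.mk _ (Sum.inr ⟨v, mem_nodesAfter_of_notMem hm hconv h hB⟩)

lemma toComposite_of_mem_nodes {v : A.G.V} (h : v ∈ L.nodes) :
    hm.toComposite hconv v = Quot.mk _ (Sum.inl (Quot.mk _ (Sum.inr (Sum.inr ⟨v, h⟩)))) :=
  dif_pos h

lemma toComposite_of_mem_nodesBefore {v : A.G.V} (hB : v ∈ A.nodesBefore L) :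
    hm.toComposite hconv v = Quot.mk _ (Sum.inl (Quot.mk _ (Sum.inl ⟨v, hB⟩))) := by
  by_cases h : v ∈ L.nodes
  · rw [toComposite_of_mem_nodes hm hconv h]
    exact congrArg (fun q => Quot.mk _ (Sum.inl q))
      (Quot.sound ⟨Sum.inr ⟨⟨v, h⟩, hB⟩, rfl, rfl⟩).symm
  · exact (dif_neg h).trans (dif_pos hB)

lemma toComposite_of_mem_nodesAfter {v : A.G.V} (hA : v ∈ A.nodesAfter L) :
    hm.toComposite hconv v = Quot.mk _ (Sum.inr ⟨v, hA⟩) := by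
  by_cases h : v ∈ L.nodes
  · rw [toComposite_of_mem_nodes hm hconv h]
    exact Quot.sound ⟨Sum.inr ⟨⟨v, h⟩, hA⟩, rfl, rfl⟩
  by_cases hB : v ∈ A.nodesBefore L
  · rw [toComposite_of_mem_nodesBefore hm hconv hB]
    have hK : v ∈ A.bypass L := ⟨⟨hB, hA⟩, h⟩
    exact (congrArg (fun q => Quot.mk _ (Sum.inl q)) (Quot.sound ⟨Sum.inl ⟨v, hK⟩, rfl, rfl⟩)).trans
      (Quot.sound ⟨Sum.inl ⟨v, hK⟩, rfl, rfl⟩)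
  · exact (dif_neg h).trans (dif_neg hB)

lemma ofComposite_toComposite (v : A.G.V) : hm.ofComposite hconv (hm.toComposite hconv v) = v := by
  by_cases h : v ∈ L.nodes
  · rw [toComposite_of_mem_nodes hm hconv h]; rfl
  by_cases hB : v ∈ A.nodesBefore L
  · rw [toComposite_of_mem_nodesBefore hm hconv hB]; rfl
  · rw [toComposite_of_mem_nodesAfter hm hconv (mem_nodesAfter_of_notMem hm hconv h hB)]; rfl

lemma toComposite_ofComposite (x : (hm.composite hconv).G.V) :
    hm.toComposite hconv (hm.ofComposite hconv x) = x := by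
  induction x using Quot.ind with | _ x
  rcases x with y | w
  · induction y using Quot.ind with | _ y
    rcases y with w | w | w
    · exact toComposite_of_mem_nodesBefore hm hconv w.2
    · exact (toComposite_of_mem_nodesBefore hm hconv w.2.1.1).trans
        (congrArg (fun q => Quot.mk _ (Sum.inl q)) (Quot.sound ⟨Sum.inl w, rfl, rfl⟩))
    · exact toComposite_of_mem_nodes hm hconv w.2
  · exact toComposite_of_mem_nodesAfter hm hconv w.2

noncomputable def nodeEquiv : A.G.V ≃ (hm.composite hconv).G.V where
  toFun := hm.toComposite hconv
  invFun := hm.ofComposite hconv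
  left_inv := hm.ofComposite_toComposite hconv
  right_inv := hm.toComposite_ofComposite hconv

open Classical in
noncomputable def toCompositeEdge (e : A.G.E) : (hm.composite hconv).G.E :=
  if h : e ∈ L.edges then Sum.inl (Sum.inr (Sum.inr ⟨e, h⟩))
  else if hA : e ∈ A.edgesAfter L then Sum.inr ⟨e, hA⟩
  else Sum.inl (Sum.inl ⟨e, h, hA⟩)

lemma toCompositeEdge_of_mem_edges {e : A.G.E} (h : e ∈ L.edges) :
    hm.toCompositeEdge hconv e = Sum.inl (Sum.inr (Sum.inr ⟨e, h⟩)) :=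
  dif_pos h

lemma toCompositeEdge_of_mem_edgesAfter {e : A.G.E} (hA : e ∈ A.edgesAfter L) :
    hm.toCompositeEdge hconv e = Sum.inr ⟨e, hA⟩ :=
  (dif_neg hA.1).trans (dif_pos hA)

lemma toCompositeEdge_of_mem_edgesBefore {e : A.G.E} (hB : e ∈ A.edgesBefore L) :
    hm.toCompositeEdge hconv e = Sum.inl (Sum.inl ⟨e, hB⟩) :=
  (dif_neg hB.1).trans (dif_neg hB.2)

noncomputable def edgeEquiv : A.G.E ≃ (hm.composite hconv).G.E where
  toFun := hm.toCompositeEdge hconv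
  invFun := Sum.elim (Sum.elim Subtype.val (Sum.elim Empty.elim Subtype.val)) Subtype.val
  left_inv e := by
    by_cases h : e ∈ L.edges
    · rw [toCompositeEdge_of_mem_edges hm hconv h]; rfl
    by_cases hA : e ∈ A.edgesAfter L
    · rw [toCompositeEdge_of_mem_edgesAfter hm hconv hA]; rfl
    · rw [toCompositeEdge_of_mem_edgesBefore hm hconv ⟨h, hA⟩]; rfl
  right_inv := by
    rintro ((⟨e, he⟩ | (x | ⟨e, he⟩)) | ⟨e, he⟩)
    · exact toCompositeEdge_of_mem_edgesBefore hm hconv he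
    · exact x.elim
    · exact toCompositeEdge_of_mem_edges hm hconv he
    · exact toCompositeEdge_of_mem_edgesAfter hm hconv he

lemma src_toCompositeEdge (e : A.G.E) : (hm.composite hconv).G.src (hm.toCompositeEdge hconv e) =
    (A.G.src e).map (hm.toComposite hconv) := by
  by_cases h : e ∈ L.edges
  · rw [toCompositeEdge_of_mem_edges hm hconv h]
    refine List.map_map.trans (List.map_map.trans ?_)
    exact L.map_src_toHyp (fun v hv => (toComposite_of_mem_nodes hm hconv hv).symm) ⟨e, h⟩
  by_cases hA : e ∈ A.edgesAfter L
  · rw [toCompositeEdge_of_mem_edgesAfter hm hconv hA]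
    exact (hm.after hconv).map_src_toHyp
      (fun v hv => (toComposite_of_mem_nodesAfter hm hconv hv).symm) ⟨e, hA⟩
  · rw [toCompositeEdge_of_mem_edgesBefore hm hconv ⟨h, hA⟩]
    refine List.map_map.trans ?_
    exact (hm.before L).map_src_toHyp
      (fun v hv => (toComposite_of_mem_nodesBefore hm hconv hv).symm) ⟨e, ⟨h, hA⟩⟩

lemma tgt_toCompositeEdge (e : A.G.E) : (hm.composite hconv).G.tgt (hm.toCompositeEdge hconv e) =
    (A.G.tgt e).map (hm.toComposite hconv) := by
  by_cases h : e ∈ L.edges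
  · rw [toCompositeEdge_of_mem_edges hm hconv h]
    refine List.map_map.trans (List.map_map.trans ?_)
    exact L.map_tgt_toHyp (fun v hv => (toComposite_of_mem_nodes hm hconv hv).symm) ⟨e, h⟩
  by_cases hA : e ∈ A.edgesAfter L
  · rw [toCompositeEdge_of_mem_edgesAfter hm hconv hA]
    exact (hm.after hconv).map_tgt_toHyp
      (fun v hv => (toComposite_of_mem_nodesAfter hm hconv hv).symm) ⟨e, hA⟩
  · rw [toCompositeEdge_of_mem_edgesBefore hm hconv ⟨h, hA⟩]
    refine List.map_map.trans ?_
    exact (hm.before L).map_tgt_toHyp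
      (fun v hv => (toComposite_of_mem_nodesBefore hm hconv hv).symm) ⟨e, ⟨h, hA⟩⟩

noncomputable def compositeIso : CospanIso A (hm.composite hconv) where
  nodeEquiv := hm.nodeEquiv hconv
  edgeEquiv := hm.edgeEquiv hconv
  src_eq := hm.src_toCompositeEdge hconv
  tgt_eq := hm.tgt_toCompositeEdge hconv
  inp_eq x := hm.toComposite_of_mem_nodesBefore hconv (Or.inl ⟨x, rfl⟩)
  out_eq y := hm.toComposite_of_mem_nodesAfter hconv (Or.inl ⟨y, rfl⟩)

end Cospan.Monogamous

lemma Cospan.Monogamous.inclusion_interfaces_eq {H : Hyp} {i j i' j' : Set H.V}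
    (h : (Cospan.mk H (fun x : i => x.1) (fun y : j => y.1)).Monogamous)
    (h' : (Cospan.mk H (fun x : i' => x.1) (fun y : j' => y.1)).Monogamous) :
    (i, j) = (i', j') := by
  refine Prod.ext ?_ ?_
  · simpa only [Subtype.range_coe] using h.range_inp_eq.trans h'.range_inp_eq.symm
  · simpa only [Subtype.range_coe] using h.range_out_eq.trans h'.range_out_eq.symm

theorem decomposition_general {m n : Type} (A : Cospan m n)
    (hV : Finite A.G.V)
    (hm : A.Monogamous) (ha : A.Acyclic)
    (L : SubHyp A.G) (hconv : L.Convex) :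
    ∃ (k : Type) (_ : Finite k),
      ∃! ij : Set L.toHyp.V × Set L.toHyp.V,
        (Cospan.mk L.toHyp (fun x : ij.1 => x.1) (fun y : ij.2 => y.1)).Monogamous ∧
        (Cospan.mk L.toHyp (fun x : ij.1 => x.1) (fun y : ij.2 => y.1)).Acyclic ∧
        ∃ (C₁s C₂s : SubHyp A.G)
          (f₁ : m → C₁s.toHyp.V) (g₁ : k ⊕ ij.1 → C₁s.toHyp.V)
          (f₂ : k ⊕ ij.2 → C₂s.toHyp.V) (g₂ : n → C₂s.toHyp.V),
          (Cospan.mk C₁s.toHyp f₁ g₁).Monogamous ∧ (Cospan.mk C₁s.toHyp f₁ g₁).Acyclic ∧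
          (Cospan.mk C₂s.toHyp f₂ g₂).Monogamous ∧ (Cospan.mk C₂s.toHyp f₂ g₂).Acyclic ∧
          A.Isomorphic
            (((Cospan.mk C₁s.toHyp f₁ g₁).comp
                ((Cospan.idCospan k).tensor
                  (Cospan.mk L.toHyp (fun x : ij.1 => x.1) (fun y : ij.2 => y.1)))).comp
              (Cospan.mk C₂s.toHyp f₂ g₂)) := by
  have hmid := hm.middleCospan_monogamous hconv
  refine ⟨A.bypass L, @Subtype.finite _ hV _, (A.inBoundary L, A.outBoundary L),
    ⟨hmid, L.acyclic_toHyp ha, hm.before L, hm.after hconv, _, _, _, _,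
      hm.beforeCospan_monogamous, (hm.before L).acyclic_toHyp ha,
      hm.afterCospan_monogamous hconv, (hm.after hconv).acyclic_toHyp ha,
      ⟨hm.compositeIso hconv⟩⟩, ?_⟩
  rintro ⟨i, j⟩ ⟨hij, -⟩
  exact hij.inclusion_interfaces_eq hmid

/-- **Decomposition Lemma.** Let `m → G ← n` be a monogamous acyclic
cospan with finite carrier and let `L` be a convex subhypergraph of `G`.  Then there
exist a finite set `k` and a unique cospan `i → L ← j` (with `i`, `j` sets of nodes of
`L` and inclusions as legs) such that `m → G ← n` is isomorphic to the composite
`(m → C₁ ← k+i) ; ((k → k ← k) ⊕ (i → L ← j)) ; (k+j → C₂ ← n)` for some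
subhypergraphs `C₁`, `C₂` of `G`, where all the cospans in the factorisation are
monogamous and acyclic. -/
theorem decomposition {m n : Type} [Finite m] [Finite n] (A : Cospan m n)
    (hV : Finite A.G.V) (hE : Finite A.G.E)
    (hm : A.Monogamous) (ha : A.Acyclic)
    (L : SubHyp A.G) (hconv : L.Convex) :
    ∃ (k : Type) (_ : Finite k),
      ∃! ij : Set L.toHyp.V × Set L.toHyp.V,
        (Cospan.mk L.toHyp (fun x : ij.1 => x.1) (fun y : ij.2 => y.1)).Monogamous ∧
        (Cospan.mk L.toHyp (fun x : ij.1 => x.1) (fun y : ij.2 => y.1)).Acyclic ∧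
        ∃ (C₁s C₂s : SubHyp A.G)
          (f₁ : m → C₁s.toHyp.V) (g₁ : k ⊕ ij.1 → C₁s.toHyp.V)
          (f₂ : k ⊕ ij.2 → C₂s.toHyp.V) (g₂ : n → C₂s.toHyp.V),
          (Cospan.mk C₁s.toHyp f₁ g₁).Monogamous ∧ (Cospan.mk C₁s.toHyp f₁ g₁).Acyclic ∧
          (Cospan.mk C₂s.toHyp f₂ g₂).Monogamous ∧ (Cospan.mk C₂s.toHyp f₂ g₂).Acyclic ∧
          A.Isomorphic
            (((Cospan.mk C₁s.toHyp f₁ g₁).comp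
                ((Cospan.idCospan k).tensor
                  (Cospan.mk L.toHyp (fun x : ij.1 => x.1) (fun y : ij.2 => y.1)))).comp
              (Cospan.mk C₂s.toHyp f₂ g₂)) :=
  decomposition_general A hV hm ha L hconv

end SDRT
end

section
/- Let L ← i+j be a left-linear rule interface (i.e. the map i+j → L is mono) such that i → L ← j is a monogamous acyclic cospan, let D ← n+m be such that n → D ← m is a monogamous acyclic cospan, and let f : L → D be an injective homomorphism whose image is a convex subhypergraph of D. Then the pushout complement of i+j → L → D obtained by deleting from D the hyperedges of f(L) and the nodes of f(L) not in the image of i+j exists, i.e. pasting L along i+j onto this complement is a pushout recovering D, and this pushout complement is a boundary complement. -/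
namespace SDRT

/-! ### Labelled hypergraphs -/

/-- A monoidal signature: a set of operation symbols, each with an arity and a
coarity. -/
structure MonSig : Type 1 where
  ops : Type
  ar : ops → ℕ
  coar : ops → ℕ

/-- A `Σ`-labelled hypergraph: each hyperedge carries a label whose arity and
coarity match the numbers of sources and targets of the hyperedge. -/
structure LHyp (S : MonSig) extends Hyp where
  label : E → S.ops
  src_len : ∀ e, (src e).length = S.ar (label e)
  tgt_len : ∀ e, (tgt e).length = S.coar (label e)

/-- A homomorphism of `Σ`-labelled hypergraphs. -/
structure LHom {S : MonSig} (G H : LHyp S) where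
  nodeMap : G.V → H.V
  edgeMap : G.E → H.E
  src_eq : ∀ e, H.src (edgeMap e) = (G.src e).map nodeMap
  tgt_eq : ∀ e, H.tgt (edgeMap e) = (G.tgt e).map nodeMap
  label_eq : ∀ e, H.label (edgeMap e) = G.label e

/-- Composition (diagrammatic order) of homomorphisms. -/
def LHom.comp {S : MonSig} {G H K : LHyp S} (f : LHom G H) (g : LHom H K) : LHom G K where
  nodeMap := g.nodeMap ∘ f.nodeMap
  edgeMap := g.edgeMap ∘ f.edgeMap
  src_eq := by intro e; simp only [Function.comp_apply, g.src_eq, f.src_eq, List.map_map]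
  tgt_eq := by intro e; simp only [Function.comp_apply, g.tgt_eq, f.tgt_eq, List.map_map]
  label_eq := by intro e; simp only [Function.comp_apply, g.label_eq, f.label_eq]

/-- The underlying homomorphism of unlabelled hypergraphs. -/
def LHom.toHypHom {S : MonSig} {G H : LHyp S} (f : LHom G H) : HypHom G.toHyp H.toHyp :=
  ⟨f.nodeMap, f.edgeMap, f.src_eq, f.tgt_eq⟩

/-- The discrete `Σ`-labelled hypergraph on a set `I` of nodes (no hyperedges). -/
def discreteLHyp (S : MonSig) (I : Type) : LHyp S where
  V := I
  E := Empty
  src := Empty.elim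
  tgt := Empty.elim
  label := fun e => e.elim
  src_len := fun e => e.elim
  tgt_len := fun e => e.elim

/-- A homomorphism out of a discrete hypergraph is just a function on nodes. -/
def discreteHom {S : MonSig} {I : Type} (C : LHyp S) (c : I → C.V) :
    LHom (discreteLHyp S I) C where
  nodeMap := c
  edgeMap := Empty.elim
  src_eq := fun e => e.elim
  tgt_eq := fun e => e.elim
  label_eq := fun e => e.elim

/-- The square `f ; inA = g ; inB` is a pushout of `Σ`-labelled hypergraphs. -/
def IsPushout {S : MonSig} {X A B P : LHyp S} (f : LHom X A) (g : LHom X B)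
    (inA : LHom A P) (inB : LHom B P) : Prop :=
  f.comp inA = g.comp inB ∧
  ∀ (W : LHyp S) (u : LHom A W) (w : LHom B W), f.comp u = g.comp w →
    ∃! t : LHom P W, inA.comp t = u ∧ inB.comp t = w

/-- A cospan of `Σ`-labelled hypergraphs with discrete interfaces. -/
structure LCospan (S : MonSig) (m n : Type) : Type 1 where
  G : LHyp S
  inp : m → G.V
  out : n → G.V

namespace LCospan

/-- The underlying unlabelled cospan. -/
def toCospan {S : MonSig} {m n : Type} (A : LCospan S m n) : Cospan m n :=
  ⟨A.G.toHyp, A.inp, A.out⟩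

def Monogamous {S : MonSig} {m n : Type} (A : LCospan S m n) : Prop := A.toCospan.Monogamous

def Acyclic {S : MonSig} {m n : Type} (A : LCospan S m n) : Prop := A.G.toHyp.Acyclic

/-- Composition of labelled cospans by pushout (gluing along the common interface). -/
def comp {S : MonSig} {m n p : Type} (A : LCospan S m n) (B : LCospan S n p) :
    LCospan S m p where
  G := { V := Quot (fun x y : A.G.V ⊕ B.G.V =>
                      ∃ k : n, x = Sum.inl (A.out k) ∧ y = Sum.inr (B.inp k))
         E := A.G.E ⊕ B.G.E
         src := Sum.elim (fun e => (A.G.src e).map (fun v => Quot.mk _ (Sum.inl v)))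
                         (fun e => (B.G.src e).map (fun v => Quot.mk _ (Sum.inr v)))
         tgt := Sum.elim (fun e => (A.G.tgt e).map (fun v => Quot.mk _ (Sum.inl v)))
                         (fun e => (B.G.tgt e).map (fun v => Quot.mk _ (Sum.inr v)))
         label := Sum.elim A.G.label B.G.label
         src_len := by rintro (e | e) <;> simp [A.G.src_len, B.G.src_len]
         tgt_len := by rintro (e | e) <;> simp [A.G.tgt_len, B.G.tgt_len] }
  inp := fun x => Quot.mk _ (Sum.inl (A.inp x))
  out := fun y => Quot.mk _ (Sum.inr (B.out y))

/-- Monoidal product (disjoint union) of labelled cospans. -/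
def tensor {S : MonSig} {m₁ n₁ m₂ n₂ : Type} (A : LCospan S m₁ n₁) (B : LCospan S m₂ n₂) :
    LCospan S (m₁ ⊕ m₂) (n₁ ⊕ n₂) where
  G := { V := A.G.V ⊕ B.G.V
         E := A.G.E ⊕ B.G.E
         src := Sum.elim (fun e => (A.G.src e).map Sum.inl) (fun e => (B.G.src e).map Sum.inr)
         tgt := Sum.elim (fun e => (A.G.tgt e).map Sum.inl) (fun e => (B.G.tgt e).map Sum.inr)
         label := Sum.elim A.G.label B.G.label
         src_len := by rintro (e | e) <;> simp [A.G.src_len, B.G.src_len]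
         tgt_len := by rintro (e | e) <;> simp [A.G.tgt_len, B.G.tgt_len] }
  inp := Sum.elim (fun x => Sum.inl (A.inp x)) (fun x => Sum.inr (B.inp x))
  out := Sum.elim (fun y => Sum.inl (A.out y)) (fun y => Sum.inr (B.out y))

/-- Reindexing of the interfaces of a cospan along functions. -/
def reind {S : MonSig} {m n m' n' : Type} (A : LCospan S m n) (f : m' → m) (g : n' → n) :
    LCospan S m' n' :=
  ⟨A.G, A.inp ∘ f, A.out ∘ g⟩

end LCospan

/-- An isomorphism of labelled cospans. -/
structure LCospanIso {S : MonSig} {m n : Type} (A B : LCospan S m n) where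
  nodeEquiv : A.G.V ≃ B.G.V
  edgeEquiv : A.G.E ≃ B.G.E
  src_eq : ∀ e, B.G.src (edgeEquiv e) = (A.G.src e).map nodeEquiv
  tgt_eq : ∀ e, B.G.tgt (edgeEquiv e) = (A.G.tgt e).map nodeEquiv
  label_eq : ∀ e, B.G.label (edgeEquiv e) = A.G.label e
  inp_eq : ∀ x, nodeEquiv (A.inp x) = B.inp x
  out_eq : ∀ y, nodeEquiv (A.out y) = B.out y

/-- `A` is a monogamous acyclic cospan. -/
def MonAcyclic {S : MonSig} {m n : Type} (A : LCospan S m n) : Prop :=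
  A.Monogamous ∧ A.Acyclic

/-- `(C, c, g)` is a pushout complement of the mono `f : L → G` along the
interface `i + j → L` of the rule. -/
def IsPushoutComplement {S : MonSig} {i j n m : Type} (L : LCospan S i j) (Gc : LCospan S n m)
    (f : LHom L.G Gc.G) (C : LHyp S) (c : i ⊕ j → C.V) (g : LHom C Gc.G) : Prop :=
  IsPushout (discreteHom L.G (Sum.elim L.inp L.out)) (discreteHom C c) f g

/-- `(C, c, g)` is a boundary complement: a pushout complement in which `c` is mono
and there are `d₁ : n → C`, `d₂ : m → C` commuting with the interface of `G` such
that the cospan `j + n → C ← m + i` is monogamous. -/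
def IsBoundaryComplement {S : MonSig} {i j n m : Type} (L : LCospan S i j) (Gc : LCospan S n m)
    (f : LHom L.G Gc.G) (C : LHyp S) (c : i ⊕ j → C.V) (g : LHom C Gc.G) : Prop :=
  IsPushoutComplement L Gc f C c g ∧ Function.Injective c ∧
  ∃ (d₁ : n → C.V) (d₂ : m → C.V),
    (∀ x, g.nodeMap (d₁ x) = Gc.inp x) ∧ (∀ y, g.nodeMap (d₂ y) = Gc.out y) ∧
    (LCospan.mk C (Sum.elim (fun y : j => c (Sum.inr y)) d₁)
                  (Sum.elim d₂ (fun x : i => c (Sum.inl x)))).Monogamous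

/-- A convex DPO rewriting step from `D ← n+m` to `E ← n+m` using the rule
`L ← i+j → R`: a mono matching `f : L → D` with convex image, and a boundary
(pushout) complement `C` such that pasting `R` back along `i+j` yields `E`,
with all interfaces preserved. -/
def ConvexStep {S : MonSig} {i j n m : Type} (Lr Rr : LCospan S i j)
    (D E : LCospan S n m) : Prop :=
  ∃ (f : LHom Lr.G D.G) (C : LHyp S) (c : i ⊕ j → C.V) (q : n ⊕ m → C.V)
    (g : LHom C D.G) (r : LHom Rr.G E.G) (h : LHom C E.G),
    Function.Injective f.nodeMap ∧ Function.Injective f.edgeMap ∧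
    f.toHypHom.image.Convex ∧
    IsPushout (discreteHom Lr.G (Sum.elim Lr.inp Lr.out)) (discreteHom C c) f g ∧
    IsPushout (discreteHom Rr.G (Sum.elim Rr.inp Rr.out)) (discreteHom C c) r h ∧
    (∀ x, g.nodeMap (q (Sum.inl x)) = D.inp x) ∧
    (∀ y, g.nodeMap (q (Sum.inr y)) = D.out y) ∧
    (∀ x, h.nodeMap (q (Sum.inl x)) = E.inp x) ∧
    (∀ y, h.nodeMap (q (Sum.inr y)) = E.out y) ∧
    Function.Injective c ∧
    (LCospan.mk C (Sum.elim (fun y : j => c (Sum.inr y)) (fun x : n => q (Sum.inl x)))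
                  (Sum.elim (fun y : m => q (Sum.inr y)) (fun x : i => c (Sum.inl x)))).Monogamous

section Aux

lemma lhom_ext {S : MonSig} {G H : LHyp S} {f g : LHom G H}
    (h1 : f.nodeMap = g.nodeMap) (h2 : f.edgeMap = g.edgeMap) : f = g := by
  cases f; cases g; cases h1; cases h2; rfl

lemma getElem?_pmap_subtype {α : Type} {P : α → Prop} :
    ∀ (l : List α) (H : ∀ a ∈ l, P a) (p : ℕ) (x : Subtype P),
      ((l.pmap (fun a h => (⟨a, h⟩ : Subtype P)) H)[p]? = some x ↔ l[p]? = some x.1)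
  | [], _, p, x => by simp
  | a :: l, H, 0, x => by simp [Subtype.ext_iff]
  | a :: l, H, (p+1), x => by
      simpa using getElem?_pmap_subtype l (fun a ha => H a (List.mem_cons_of_mem _ ha)) p x

lemma pmap_map_eq {α β : Type} {P : α → Prop} (g : Subtype P → β) (t : α → β)
    (ht : ∀ a (h : P a), t a = g ⟨a, h⟩) :
    ∀ (l : List α) (H : ∀ a ∈ l, P a),
      (l.pmap (fun a h => (⟨a, h⟩ : Subtype P)) H).map g = l.map t
  | [], _ => rfl
  | a :: l, H => by
      simp only [List.pmap, List.map_cons, List.map]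
      rw [pmap_map_eq g t ht l (fun a ha => H a (List.mem_cons_of_mem _ ha)), ht]

end Aux

/-- Let `L ← i+j` be a left-linear rule interface (the map
`i+j → L` is mono) with `i → L ← j` monogamous acyclic, let `n → D ← m` be
monogamous acyclic, and let `f : L → D` be an injective homomorphism with convex
image.  Then the pushout complement obtained by deleting from `D` the hyperedges
of `f(L)` and the nodes of `f(L)` not in the image of `i+j` exists: pasting `L`
along `i+j` onto it is a pushout recovering `D`, and it is a boundary
complement. -/
theorem deletion_pushout_complement {S : MonSig} {i j n m : Type}
    [Finite i] [Finite j] [Finite n] [Finite m]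
    (L : LCospan S i j) (D : LCospan S n m)
    (hLm : L.Monogamous) (hLa : L.Acyclic) (hDm : D.Monogamous) (hDa : D.Acyclic)
    (hleft : Function.Injective (Sum.elim L.inp L.out))
    (f : LHom L.G D.G)
    (hfn : Function.Injective f.nodeMap) (hfe : Function.Injective f.edgeMap)
    (hconv : f.toHypHom.image.Convex) :
    ∃ (C : LHyp S) (c : i ⊕ j → C.V) (g : LHom C D.G),
      Function.Injective g.nodeMap ∧ Function.Injective g.edgeMap ∧
      (∀ x, g.nodeMap (c x) = f.nodeMap (Sum.elim L.inp L.out x)) ∧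
      Set.range g.nodeMap =
        {v | v ∉ Set.range f.nodeMap ∨ ∃ x, f.nodeMap (Sum.elim L.inp L.out x) = v} ∧
      Set.range g.edgeMap = {e | e ∉ Set.range f.edgeMap} ∧
      IsPushoutComplement L D f C c g ∧
      IsBoundaryComplement L D f C c g := by
  classical
  -- unpack monogamy
  have hLoutInj : Function.Injective L.out := hLm.2.1
  have hDinpInj : Function.Injective D.inp := hDm.1
  have hDoutInj : Function.Injective D.out := hDm.2.1
  have hLinZ' : ∀ v, (∃ x, L.inp x = v) → L.G.toHyp.inPairs v = ∅ :=
    fun v h => hLm.2.2.1 v h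
  have hLinO' : ∀ v, (¬ ∃ x, L.inp x = v) → ∃! p, p ∈ L.G.toHyp.inPairs v :=
    fun v h => hLm.2.2.2.1 v h
  have hLoutZ' : ∀ v, (∃ x, L.out x = v) → L.G.toHyp.outPairs v = ∅ :=
    fun v h => hLm.2.2.2.2.1 v h
  have hLoutO' : ∀ v, (¬ ∃ x, L.out x = v) → ∃! p, p ∈ L.G.toHyp.outPairs v :=
    fun v h => hLm.2.2.2.2.2 v h
  have hDinZ' : ∀ v, (∃ x, D.inp x = v) → D.G.toHyp.inPairs v = ∅ :=
    fun v h => hDm.2.2.1 v h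
  have hDinO' : ∀ v, (¬ ∃ x, D.inp x = v) → ∃! p, p ∈ D.G.toHyp.inPairs v :=
    fun v h => hDm.2.2.2.1 v h
  have hDoutZ' : ∀ v, (∃ x, D.out x = v) → D.G.toHyp.outPairs v = ∅ :=
    fun v h => hDm.2.2.2.2.1 v h
  have hDoutO' : ∀ v, (¬ ∃ x, D.out x = v) → ∃! p, p ∈ D.G.toHyp.outPairs v :=
    fun v h => hDm.2.2.2.2.2 v h
  -- transfer of source/target positions along f
  have fwd_tgt : ∀ (h : L.G.E) (p : ℕ) (v : L.G.V),
      (L.G.tgt h)[p]? = some v → (D.G.tgt (f.edgeMap h))[p]? = some (f.nodeMap v) := by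
    intro h p v hv
    rw [f.tgt_eq, List.getElem?_map, hv]; rfl
  have fwd_src : ∀ (h : L.G.E) (p : ℕ) (v : L.G.V),
      (L.G.src h)[p]? = some v → (D.G.src (f.edgeMap h))[p]? = some (f.nodeMap v) := by
    intro h p v hv
    rw [f.src_eq, List.getElem?_map, hv]; rfl
  have bwd_tgt : ∀ (h : L.G.E) (p : ℕ) (v : D.G.V),
      (D.G.tgt (f.edgeMap h))[p]? = some v →
        ∃ w, (L.G.tgt h)[p]? = some w ∧ f.nodeMap w = v := by
    intro h p v hv
    rw [f.tgt_eq, List.getElem?_map] at hv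
    cases h' : (L.G.tgt h)[p]? with
    | none => rw [h'] at hv; simp at hv
    | some w => rw [h'] at hv; exact ⟨w, rfl, by simpa using hv⟩
  have bwd_src : ∀ (h : L.G.E) (p : ℕ) (v : D.G.V),
      (D.G.src (f.edgeMap h))[p]? = some v →
        ∃ w, (L.G.src h)[p]? = some w ∧ f.nodeMap w = v := by
    intro h p v hv
    rw [f.src_eq, List.getElem?_map] at hv
    cases h' : (L.G.src h)[p]? with
    | none => rw [h'] at hv; simp at hv
    | some w => rw [h'] at hv; exact ⟨w, rfl, by simpa using hv⟩
  -- disjointness of the two interface legs of L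
  have hLout_notin : ∀ y : j, ¬ ∃ x, L.inp x = L.out y := by
    rintro y ⟨x, hx⟩
    have := hleft (show (Sum.elim L.inp L.out) (Sum.inl x) =
      (Sum.elim L.inp L.out) (Sum.inr y) from hx)
    simp at this
  have hLinp_notout : ∀ x : i, ¬ ∃ y, L.out y = L.inp x := by
    rintro x ⟨y, hy⟩
    have := hleft (show (Sum.elim L.inp L.out) (Sum.inr y) =
      (Sum.elim L.inp L.out) (Sum.inl x) from hy)
    simp at this
  set NC : Set D.G.V :=
    {v | v ∉ Set.range f.nodeMap ∨ ∃ x, f.nodeMap (Sum.elim L.inp L.out x) = v} with hNC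
  -- closure of the complement under sources and targets
  have tgt_closure : ∀ (e : D.G.E), e ∉ Set.range f.edgeMap → ∀ v ∈ D.G.tgt e, v ∈ NC := by
    intro e he v hv
    by_cases hvf : v ∈ Set.range f.nodeMap
    · obtain ⟨w, rfl⟩ := hvf
      right
      by_cases hw : ∃ x, L.inp x = w
      · obtain ⟨x, rfl⟩ := hw; exact ⟨Sum.inl x, rfl⟩
      · exfalso
        obtain ⟨⟨h, p⟩, hp, -⟩ := hLinO' w hw
        have hD : ((f.edgeMap h, p) : D.G.E × ℕ) ∈ D.G.toHyp.inPairs (f.nodeMap w) :=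
          fwd_tgt h p w hp
        obtain ⟨p', hp'⟩ := List.getElem?_of_mem hv
        have hD2 : ((e, p') : D.G.E × ℕ) ∈ D.G.toHyp.inPairs (f.nodeMap w) := hp'
        by_cases hDi : ∃ x, D.inp x = f.nodeMap w
        · rw [hDinZ' _ hDi] at hD2; exact hD2
        · obtain ⟨q, -, hq⟩ := hDinO' _ hDi
          have e1 := (hq _ hD2).trans (hq _ hD).symm
          exact he ⟨h, (congrArg Prod.fst e1).symm⟩
    · exact Or.inl hvf
  have src_closure : ∀ (e : D.G.E), e ∉ Set.range f.edgeMap → ∀ v ∈ D.G.src e, v ∈ NC := by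
    intro e he v hv
    by_cases hvf : v ∈ Set.range f.nodeMap
    · obtain ⟨w, rfl⟩ := hvf
      right
      by_cases hw : ∃ y, L.out y = w
      · obtain ⟨y, rfl⟩ := hw; exact ⟨Sum.inr y, rfl⟩
      · exfalso
        obtain ⟨⟨h, p⟩, hp, -⟩ := hLoutO' w hw
        have hD : ((f.edgeMap h, p) : D.G.E × ℕ) ∈ D.G.toHyp.outPairs (f.nodeMap w) :=
          fwd_src h p w hp
        obtain ⟨p', hp'⟩ := List.getElem?_of_mem hv
        have hD2 : ((e, p') : D.G.E × ℕ) ∈ D.G.toHyp.outPairs (f.nodeMap w) := hp'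
        by_cases hDi : ∃ y, D.out y = f.nodeMap w
        · rw [hDoutZ' _ hDi] at hD2; exact hD2
        · obtain ⟨q, -, hq⟩ := hDoutO' _ hDi
          have e1 := (hq _ hD2).trans (hq _ hD).symm
          exact he ⟨h, (congrArg Prod.fst e1).symm⟩
    · exact Or.inl hvf
  -- the complement hypergraph
  let C : LHyp S :=
    { V := NC
      E := {e : D.G.E // e ∉ Set.range f.edgeMap}
      src := fun e => (D.G.src e.1).pmap (fun v h => (⟨v, h⟩ : NC)) (src_closure e.1 e.2)
      tgt := fun e => (D.G.tgt e.1).pmap (fun v h => (⟨v, h⟩ : NC)) (tgt_closure e.1 e.2)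
      label := fun e => D.G.label e.1
      src_len := by intro e; rw [List.length_pmap]; exact D.G.src_len e.1
      tgt_len := by intro e; rw [List.length_pmap]; exact D.G.tgt_len e.1 }
  let c : i ⊕ j → C.V := fun x => ⟨f.nodeMap (Sum.elim L.inp L.out x), Or.inr ⟨x, rfl⟩⟩
  let g : LHom C D.G :=
    { nodeMap := Subtype.val
      edgeMap := Subtype.val
      src_eq := fun e => by
        rw [pmap_map_eq Subtype.val id (fun a h => rfl), List.map_id]
      tgt_eq := fun e => by
        rw [pmap_map_eq Subtype.val id (fun a h => rfl), List.map_id]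
      label_eq := fun e => rfl }
  -- transfer of in/out pairs between C and D
  have memC_in : ∀ (e : C.E) (p : ℕ) (v : C.V),
      ((e, p) ∈ C.toHyp.inPairs v ↔ ((e.1, p) : D.G.E × ℕ) ∈ D.G.toHyp.inPairs v.1) :=
    fun e p v => getElem?_pmap_subtype (D.G.tgt e.1) (tgt_closure e.1 e.2) p v
  have memC_out : ∀ (e : C.E) (p : ℕ) (v : C.V),
      ((e, p) ∈ C.toHyp.outPairs v ↔ ((e.1, p) : D.G.E × ℕ) ∈ D.G.toHyp.outPairs v.1) :=
    fun e p v => getElem?_pmap_subtype (D.G.src e.1) (src_closure e.1 e.2) p v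
  -- nodes in the image of the out-interface of L have an incoming edge in the image of f
  have hfoutne : ∀ y : j, ∃ q, q ∈ D.G.toHyp.inPairs (f.nodeMap (L.out y)) := by
    intro y
    obtain ⟨⟨h, p⟩, hp, -⟩ := hLinO' (L.out y) (hLout_notin y)
    exact ⟨(f.edgeMap h, p), fwd_tgt h p _ hp⟩
  have hfinpne : ∀ x : i, ∃ q, q ∈ D.G.toHyp.outPairs (f.nodeMap (L.inp x)) := by
    intro x
    obtain ⟨⟨h, p⟩, hp, -⟩ := hLoutO' (L.inp x) (hLinp_notout x)
    exact ⟨(f.edgeMap h, p), fwd_src h p _ hp⟩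
  have hDfout : ∀ y : j, ∀ q ∈ D.G.toHyp.inPairs (f.nodeMap (L.out y)),
      q.1 ∈ Set.range f.edgeMap := by
    intro y q hq
    obtain ⟨⟨h, p⟩, hp, -⟩ := hLinO' (L.out y) (hLout_notin y)
    have hfp : ((f.edgeMap h, p) : D.G.E × ℕ) ∈ D.G.toHyp.inPairs (f.nodeMap (L.out y)) :=
      fwd_tgt h p _ hp
    by_cases hDi : ∃ x, D.inp x = f.nodeMap (L.out y)
    · rw [hDinZ' _ hDi] at hq; exact hq.elim
    · obtain ⟨q0, -, huniq⟩ := hDinO' _ hDi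
      have heq := (huniq q hq).trans (huniq _ hfp).symm
      rw [heq]; exact ⟨h, rfl⟩
  have hDfinp : ∀ x : i, ∀ q ∈ D.G.toHyp.outPairs (f.nodeMap (L.inp x)),
      q.1 ∈ Set.range f.edgeMap := by
    intro x q hq
    obtain ⟨⟨h, p⟩, hp, -⟩ := hLoutO' (L.inp x) (hLinp_notout x)
    have hfp : ((f.edgeMap h, p) : D.G.E × ℕ) ∈ D.G.toHyp.outPairs (f.nodeMap (L.inp x)) :=
      fwd_src h p _ hp
    by_cases hDi : ∃ y, D.out y = f.nodeMap (L.inp x)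
    · rw [hDoutZ' _ hDi] at hq; exact hq.elim
    · obtain ⟨q0, -, huniq⟩ := hDoutO' _ hDi
      have heq := (huniq q hq).trans (huniq _ hfp).symm
      rw [heq]; exact ⟨h, rfl⟩
  -- the pushout complement property
  have hpoc : IsPushoutComplement L D f C c g := by
    constructor
    · exact lhom_ext (funext fun x => rfl) (funext fun e => e.elim)
    · intro W u w hcomm
      have hcn : ∀ x, u.nodeMap (Sum.elim L.inp L.out x) = w.nodeMap (c x) :=
        fun x => congrFun (congrArg LHom.nodeMap hcomm) x
      let tnode : D.G.V → W.V := fun v =>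
        if hv : v ∈ Set.range f.nodeMap then u.nodeMap hv.choose
        else w.nodeMap ⟨v, Or.inl hv⟩
      let tedge : D.G.E → W.E := fun e =>
        if he : e ∈ Set.range f.edgeMap then u.edgeMap he.choose
        else w.edgeMap ⟨e, he⟩
      have tF : ∀ lv, tnode (f.nodeMap lv) = u.nodeMap lv := by
        intro lv
        have hv : f.nodeMap lv ∈ Set.range f.nodeMap := ⟨lv, rfl⟩
        simp only [tnode, dif_pos hv]
        exact congrArg u.nodeMap (hfn hv.choose_spec)
      have tFe : ∀ h, tedge (f.edgeMap h) = u.edgeMap h := by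
        intro h
        have he : f.edgeMap h ∈ Set.range f.edgeMap := ⟨h, rfl⟩
        simp only [tedge, dif_pos he]
        exact congrArg u.edgeMap (hfe he.choose_spec)
      have tC : ∀ v (hv : v ∈ NC), tnode v = w.nodeMap ⟨v, hv⟩ := by
        intro v hv
        have hv0 : v ∉ Set.range f.nodeMap ∨
            ∃ x, f.nodeMap (Sum.elim L.inp L.out x) = v := hv
        by_cases hvf : v ∈ Set.range f.nodeMap
        · rcases hv0 with hv' | ⟨x, hx⟩
          · exact absurd hvf hv'
          · have hcx : c x = ⟨v, hv⟩ := Subtype.ext hx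
            calc tnode v = tnode (f.nodeMap (Sum.elim L.inp L.out x)) := by rw [hx]
              _ = u.nodeMap (Sum.elim L.inp L.out x) := tF _
              _ = w.nodeMap (c x) := hcn x
              _ = w.nodeMap ⟨v, hv⟩ := by rw [hcx]
        · simp only [tnode, dif_neg hvf]
      have tCe : ∀ (e : D.G.E) (he : e ∉ Set.range f.edgeMap),
          tedge e = w.edgeMap ⟨e, he⟩ := by
        intro e he
        simp only [tedge, dif_neg he]
      have hsrc : ∀ e, W.src (tedge e) = (D.G.src e).map tnode := by
        intro e
        by_cases he : e ∈ Set.range f.edgeMap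
        · obtain ⟨h, rfl⟩ := he
          rw [tFe, u.src_eq, f.src_eq, List.map_map]
          exact List.map_congr_left fun a _ => (tF a).symm
        · rw [tCe e he, w.src_eq]
          exact pmap_map_eq w.nodeMap tnode tC (D.G.src e) (src_closure e he)
      have htgt : ∀ e, W.tgt (tedge e) = (D.G.tgt e).map tnode := by
        intro e
        by_cases he : e ∈ Set.range f.edgeMap
        · obtain ⟨h, rfl⟩ := he
          rw [tFe, u.tgt_eq, f.tgt_eq, List.map_map]
          exact List.map_congr_left fun a _ => (tF a).symm
        · rw [tCe e he, w.tgt_eq]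
          exact pmap_map_eq w.nodeMap tnode tC (D.G.tgt e) (tgt_closure e he)
      have hlab : ∀ e, W.label (tedge e) = D.G.label e := by
        intro e
        by_cases he : e ∈ Set.range f.edgeMap
        · obtain ⟨h, rfl⟩ := he
          rw [tFe, u.label_eq, f.label_eq]
        · rw [tCe e he, w.label_eq]
      refine ⟨⟨tnode, tedge, hsrc, htgt, hlab⟩, ⟨?_, ?_⟩, ?_⟩
      · exact lhom_ext (funext tF) (funext tFe)
      · exact lhom_ext (funext fun v => tC v.1 v.2) (funext fun e => tCe e.1 e.2)
      · rintro t' ⟨h1, h2⟩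
        apply lhom_ext
        · funext v
          by_cases hv : v ∈ Set.range f.nodeMap
          · obtain ⟨lv, rfl⟩ := hv
            exact (congrFun (congrArg LHom.nodeMap h1) lv).trans (tF lv).symm
          · exact (congrFun (congrArg LHom.nodeMap h2) ⟨v, Or.inl hv⟩).trans
              (tC v (Or.inl hv)).symm
        · funext e
          by_cases he : e ∈ Set.range f.edgeMap
          · obtain ⟨h, rfl⟩ := he
            exact (congrFun (congrArg LHom.edgeMap h1) h).trans (tFe h).symm
          · exact (congrFun (congrArg LHom.edgeMap h2) ⟨e, he⟩).trans (tCe e he).symm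
  -- interface membership for the boundary
  have hd1mem : ∀ x : n, D.inp x ∈ NC := by
    intro x
    by_cases hvf : D.inp x ∈ Set.range f.nodeMap
    · obtain ⟨w, hw⟩ := hvf
      right
      by_cases hwi : ∃ x', L.inp x' = w
      · obtain ⟨x', hx'⟩ := hwi
        exact ⟨Sum.inl x', by rw [Sum.elim_inl, hx', hw]⟩
      · exfalso
        obtain ⟨⟨h, p⟩, hp, -⟩ := hLinO' w hwi
        have hD : ((f.edgeMap h, p) : D.G.E × ℕ) ∈ D.G.toHyp.inPairs (D.inp x) := by
          rw [← hw]; exact fwd_tgt h p w hp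
        rw [hDinZ' _ ⟨x, rfl⟩] at hD; exact hD
    · exact Or.inl hvf
  have hd2mem : ∀ y : m, D.out y ∈ NC := by
    intro y
    by_cases hvf : D.out y ∈ Set.range f.nodeMap
    · obtain ⟨w, hw⟩ := hvf
      right
      by_cases hwi : ∃ y', L.out y' = w
      · obtain ⟨y', hy'⟩ := hwi
        exact ⟨Sum.inr y', by rw [Sum.elim_inr, hy', hw]⟩
      · exfalso
        obtain ⟨⟨h, p⟩, hp, -⟩ := hLoutO' w hwi
        have hD : ((f.edgeMap h, p) : D.G.E × ℕ) ∈ D.G.toHyp.outPairs (D.out y) := by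
          rw [← hw]; exact fwd_src h p w hp
        rw [hDoutZ' _ ⟨y, rfl⟩] at hD; exact hD
    · exact Or.inl hvf
  let d1 : n → C.V := fun x => ⟨D.inp x, hd1mem x⟩
  let d2 : m → C.V := fun y => ⟨D.out y, hd2mem y⟩
  -- monogamy of the boundary cospan
  have hinjinp : Function.Injective
      (Sum.elim (fun y : j => c (Sum.inr y)) d1 : j ⊕ n → C.V) := by
    rintro (y | x) (y' | x') hab <;>
      have hval := congrArg Subtype.val hab
    · have : L.out y = L.out y' := hfn hval
      rw [hLoutInj this]
    · exfalso
      obtain ⟨q, hq⟩ := hfoutne y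
      rw [show f.nodeMap (L.out y) = D.inp x' from hval] at hq
      rw [hDinZ' _ ⟨x', rfl⟩] at hq; exact hq
    · exfalso
      obtain ⟨q, hq⟩ := hfoutne y'
      rw [show f.nodeMap (L.out y') = D.inp x from hval.symm] at hq
      rw [hDinZ' _ ⟨x, rfl⟩] at hq; exact hq
    · rw [hDinpInj hval]
  have hinjout : Function.Injective
      (Sum.elim d2 (fun x : i => c (Sum.inl x)) : m ⊕ i → C.V) := by
    rintro (y | x) (y' | x') hab <;>
      have hval := congrArg Subtype.val hab
    · rw [hDoutInj hval]
    · exfalso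
      obtain ⟨q, hq⟩ := hfinpne x'
      rw [show f.nodeMap (L.inp x') = D.out y from hval.symm] at hq
      rw [hDoutZ' _ ⟨y, rfl⟩] at hq; exact hq
    · exfalso
      obtain ⟨q, hq⟩ := hfinpne x
      rw [show f.nodeMap (L.inp x) = D.out y' from hval] at hq
      rw [hDoutZ' _ ⟨y', rfl⟩] at hq; exact hq
    · have : L.inp x = L.inp x' := hfn hval
      have := hleft (show (Sum.elim L.inp L.out) (Sum.inl x) =
        (Sum.elim L.inp L.out) (Sum.inl x') from this)
      rw [Sum.inl.injEq] at this
      rw [this]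
  have hinz : ∀ v ∈ Set.range (Sum.elim (fun y : j => c (Sum.inr y)) d1 : j ⊕ n → C.V),
      C.toHyp.inDegZero v := by
    rintro v ⟨z, rfl⟩
    show C.toHyp.inPairs _ = ∅
    apply Set.eq_empty_iff_forall_notMem.mpr
    rintro ⟨e, p⟩ hq
    have hqD := (memC_in e p _).mp hq
    cases z with
    | inl y => exact e.2 (hDfout y _ hqD)
    | inr x => exact Set.eq_empty_iff_forall_notMem.mp (hDinZ' (D.inp x) ⟨x, rfl⟩) _ hqD
  have houtz : ∀ v ∈ Set.range (Sum.elim d2 (fun x : i => c (Sum.inl x)) : m ⊕ i → C.V),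
      C.toHyp.outDegZero v := by
    rintro v ⟨z, rfl⟩
    show C.toHyp.outPairs _ = ∅
    apply Set.eq_empty_iff_forall_notMem.mpr
    rintro ⟨e, p⟩ hq
    have hqD := (memC_out e p _).mp hq
    cases z with
    | inl y => exact Set.eq_empty_iff_forall_notMem.mp (hDoutZ' (D.out y) ⟨y, rfl⟩) _ hqD
    | inr x => exact e.2 (hDfinp x _ hqD)
  have hino : ∀ v ∉ Set.range (Sum.elim (fun y : j => c (Sum.inr y)) d1 : j ⊕ n → C.V),
      C.toHyp.inDegOne v := by
    intro v hv
    have hv1 : ¬ ∃ x : n, D.inp x = v.1 := by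
      rintro ⟨x, hx⟩; exact hv ⟨Sum.inr x, Subtype.ext hx⟩
    have hv2 : ∀ y : j, f.nodeMap (L.out y) ≠ v.1 := by
      intro y hy; exact hv ⟨Sum.inl y, Subtype.ext hy⟩
    obtain ⟨⟨e, p⟩, hq, huniq⟩ := hDinO' v.1 hv1
    have heC : e ∉ Set.range f.edgeMap := by
      rintro ⟨h, rfl⟩
      obtain ⟨wv, hwv, hfwv⟩ := bwd_tgt h p v.1 hq
      rcases v.2 with hnf | ⟨x, hx⟩
      · exact hnf ⟨wv, hfwv⟩
      · cases x with
        | inl x' =>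
            have hwe : wv = L.inp x' := hfn (by rw [hfwv, ← hx]; rfl)
            have h0 := hLinZ' (L.inp x') ⟨x', rfl⟩
            rw [hwe] at hwv
            have hmem : ((h, p) : L.G.E × ℕ) ∈ L.G.toHyp.inPairs (L.inp x') := hwv
            rw [h0] at hmem; exact hmem
        | inr y => exact hv2 y hx
    refine ⟨(⟨e, heC⟩, p), (memC_in ⟨e, heC⟩ p v).mpr hq, ?_⟩
    rintro ⟨e', p'⟩ hq'
    have heq := huniq (e'.1, p') ((memC_in e' p' v).mp hq')
    have h1 : e'.1 = e := congrArg Prod.fst heq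
    have h2 : p' = p := congrArg Prod.snd heq
    exact Prod.ext (Subtype.ext h1) h2
  have houto : ∀ v ∉ Set.range (Sum.elim d2 (fun x : i => c (Sum.inl x)) : m ⊕ i → C.V),
      C.toHyp.outDegOne v := by
    intro v hv
    have hv1 : ¬ ∃ y : m, D.out y = v.1 := by
      rintro ⟨y, hy⟩; exact hv ⟨Sum.inl y, Subtype.ext hy⟩
    have hv2 : ∀ x : i, f.nodeMap (L.inp x) ≠ v.1 := by
      intro x hx; exact hv ⟨Sum.inr x, Subtype.ext hx⟩
    obtain ⟨⟨e, p⟩, hq, huniq⟩ := hDoutO' v.1 hv1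
    have heC : e ∉ Set.range f.edgeMap := by
      rintro ⟨h, rfl⟩
      obtain ⟨wv, hwv, hfwv⟩ := bwd_src h p v.1 hq
      rcases v.2 with hnf | ⟨x, hx⟩
      · exact hnf ⟨wv, hfwv⟩
      · cases x with
        | inl x' => exact hv2 x' hx
        | inr y =>
            have hwe : wv = L.out y := hfn (by rw [hfwv, ← hx]; rfl)
            have h0 := hLoutZ' (L.out y) ⟨y, rfl⟩
            rw [hwe] at hwv
            have hmem : ((h, p) : L.G.E × ℕ) ∈ L.G.toHyp.outPairs (L.out y) := hwv
            rw [h0] at hmem; exact hmem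
    refine ⟨(⟨e, heC⟩, p), (memC_out ⟨e, heC⟩ p v).mpr hq, ?_⟩
    rintro ⟨e', p'⟩ hq'
    have heq := huniq (e'.1, p') ((memC_out e' p' v).mp hq')
    have h1 : e'.1 = e := congrArg Prod.fst heq
    have h2 : p' = p := congrArg Prod.snd heq
    exact Prod.ext (Subtype.ext h1) h2
  refine ⟨C, c, g, fun a b h => Subtype.ext h, fun a b h => Subtype.ext h,
    fun x => rfl, Subtype.range_val, Subtype.range_val, hpoc, hpoc, ?_, d1, d2,
    fun x => rfl, fun y => rfl, ?_, ?_, hinz, hino, houtz, houto⟩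
  · intro a b hab
    exact hleft (hfn (congrArg Subtype.val hab))
  · exact hinjinp
  · exact hinjout


end SDRT
end
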